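/- arXiv:1111.1459 — 6 statements merged into one kernel-verified Lean document; each statement's English description precedes it below -/
import Mathlib

section
/- Let r be a rotor type of period n with at least three distinct states, and let s1, s2, s3 be distinct states of r. If the merging reduction s3→s1 of r is block-repetitive with block length a, the merging reduction s3→s2 of r is block-repetitive with block length b, and d ≥ 2 is a common divisor of a and b, then r itself is block-repetitive with block length d. -/
open scoped Classical

/-! ### Periodic sequences and rotor types

A rotor type is modelled as a function `f : ℕ → ℕ` (0-based reindexing of the paper's
sequence `r(1), r(2), …`, so the paper's `r(k)` is `f (k-1)`), together with its minimal
period `n`.  The states of the rotor are the values occurring in one period. -/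

def IsPeriodicWith {α : Type*} (f : ℕ → α) (n : ℕ) : Prop := ∀ k, f (k + n) = f k

def IsMinimalPeriod {α : Type*} (f : ℕ → α) (n : ℕ) : Prop :=
  0 < n ∧ IsPeriodicWith f n ∧ ∀ m, 0 < m → IsPeriodicWith f m → n ≤ m

noncomputable def minPeriod {α : Type*} (f : ℕ → α) : ℕ :=
  sInf {n | 0 < n ∧ IsPeriodicWith f n}

/-- `f` (with period `n`) reads the same forwards and backwards:
`r(k) = r(n+1-k)` for `1 ≤ k ≤ n`, written 0-based. -/
def Palindromic (f : ℕ → ℕ) (n : ℕ) : Prop := ∀ k < n, f k = f (n - 1 - k)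

/-- `f` (with period `n`) is block-repetitive with block length `m`. -/
def BlockRepetitive (f : ℕ → ℕ) (n m : ℕ) : Prop :=
  2 ≤ m ∧ m ∣ n ∧ ∀ k : ℕ, ∀ j < m, f (k * m + j) = f (k * m)

def Boppy (f : ℕ → ℕ) (n : ℕ) : Prop := Palindromic f n ∨ ∃ m, BlockRepetitive f n m

/-- The set of states of a rotor type of period `n`. -/
def states (f : ℕ → ℕ) (n : ℕ) : Finset ℕ := (Finset.range n).image f

/-- Number of occurrences of the state `v` among the first `n` terms of `f`. -/
noncomputable def countIn (f : ℕ → ℕ) (n v : ℕ) : ℕ :=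
  ((Finset.range n).filter (fun k => f k = v)).card

/-- Merging reduction `s → s'`: replace every occurrence of `s` by `s'`. -/
def merge (f : ℕ → ℕ) (s s' : ℕ) : ℕ → ℕ := fun k => if f k = s then s' else f k

/-- Destructive reduction `x(s)`: delete every occurrence of `s` and re-index. -/
noncomputable def destroy (f : ℕ → ℕ) (s : ℕ) : ℕ → ℕ :=
  fun k => f (Nat.nth (fun i => f i ≠ s) k)

/-- A two-state rotor type with states `1` and `2`, both occurring. -/
def TwoState (f : ℕ → ℕ) : Prop :=
  (∀ k, f k = 1 ∨ f k = 2) ∧ (∃ k, f k = 1) ∧ (∃ k, f k = 2)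

/-! ### The compressor

The particle's trajectory alternates: at step `t` (0-based) the source `v1` fires its
`(t+1)`-st term `f t`; if it is `1`, the particle moves to `v2`, whose firing count so far
is the number of `1`'s among `f 0, …, f (t-1)`; if it is `2`, it moves to `v3` similarly.
From `v2`/`v3` the particle either returns to the source (no target hit) or hits target
`4`/`5` and restarts at the source.  `X Y : Bool` encode the variation, `true` = `U`:
at `v2` state `1` routes up to `v1` iff `X = true`; at `v3` state `1` routes up iff
`Y = true`. -/

noncomputable def hitAt (X Y : Bool) (r : ℕ → ℕ) (t : ℕ) : Option ℕ :=
  if r t = 1 then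
    (if decide (r (countIn r t 1) = 1) ≠ X then some 4 else none)
  else
    (if decide (r (countIn r t 2) = 1) ≠ Y then some 5 else none)

/-- The hitting sequence of the compressor variation `XY` on rotor type `r`:
the subsequence of recorded targets (`4` or `5`), in order. -/
noncomputable def compSeq (X Y : Bool) (r : ℕ → ℕ) : ℕ → ℕ :=
  fun k => (hitAt X Y r (Nat.nth (fun t => (hitAt X Y r t).isSome = true) k)).getD 4

noncomputable def UUseq (r : ℕ → ℕ) : ℕ → ℕ := compSeq true true r
noncomputable def UDseq (r : ℕ → ℕ) : ℕ → ℕ := compSeq true false r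
noncomputable def DUseq (r : ℕ → ℕ) : ℕ → ℕ := compSeq false true r
noncomputable def DDseq (r : ℕ → ℕ) : ℕ → ℕ := compSeq false false r

/-- The compressor output with targets `4, 5` relabelled as states `1, 2`. -/
noncomputable def compOp (X Y : Bool) (r : ℕ → ℕ) : ℕ → ℕ := fun k => compSeq X Y r k - 3

noncomputable def UUop (r : ℕ → ℕ) : ℕ → ℕ := compOp true true r
noncomputable def UDop (r : ℕ → ℕ) : ℕ → ℕ := compOp true false r
noncomputable def DUop (r : ℕ → ℕ) : ℕ → ℕ := compOp false true r
noncomputable def DDop (r : ℕ → ℕ) : ℕ → ℕ := compOp false false r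

/-- A finite composition of compressor operations (each given by its pair of letters),
with the targets relabelled back to `1, 2` after each application. -/
noncomputable def applyOps (ops : List (Bool × Bool)) (r : ℕ → ℕ) : ℕ → ℕ :=
  ops.foldl (fun s o => compOp o.1 o.2 s) r

/-- The hitting sequence of the depth-2 binary tree network `BT` on `r`
(targets `1,2,3,4`): every firing of the source produces a hit. -/
noncomputable def BTseq (r : ℕ → ℕ) : ℕ → ℕ :=
  fun t => if r t = 1 then (if r (countIn r t 1) = 1 then 1 else 2)
           else (if r (countIn r t 2) = 1 then 3 else 4)

/-- Two sequences are equivalent if one is obtained from the other by a relabelling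
that is injective on the values of the first (a bijective relabelling of states). -/
def SeqEquiv {α β : Type*} (f : ℕ → α) (g : ℕ → β) : Prop :=
  ∃ ρ : α → β, (∀ k, ρ (f k) = g k) ∧ ∀ k l, ρ (f k) = ρ (f l) → f k = f l

/-- Every aligned block of length `m` of `f` contains states `1` and `2` equally often
(`m = 2n` gives `2n`-balance). -/
def BalancedBlocks (f : ℕ → ℕ) (m : ℕ) : Prop :=
  ∀ k : ℕ, countIn (fun j => f (k * m + j)) m 1 = countIn (fun j => f (k * m + j)) m 2

/-- `f ≡_m g` : some relabelling of `f` (injective on states) has the same multiset of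
entries as `g` on every aligned block of length `m`. -/
def BlockEquiv (f g : ℕ → ℕ) (m : ℕ) : Prop :=
  ∃ ρ : ℕ → ℕ, (∀ k l, ρ (f k) = ρ (f l) ↔ f k = f l) ∧
    ∀ k : ℕ, (Multiset.range m).map (fun j => ρ (f (k * m + j))) =
             (Multiset.range m).map (fun j => g (k * m + j))

/-- `L` is a balanced run decomposition of one period (of length `p`) of `f`:
a list of positive run lengths summing to `p` such that each corresponding
consecutive run contains `1` and `2` equally often. -/
noncomputable def IsBRD (f : ℕ → ℕ) (p : ℕ) (L : List ℕ) : Prop :=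
  L.sum = p ∧ (∀ a ∈ L, 0 < a) ∧
  ∀ i : Fin L.length,
    countIn (fun j => f ((L.take i.1).sum + j)) (L.get i) 1 =
    countIn (fun j => f ((L.take i.1).sum + j)) (L.get i) 2

/-- `L` is a uniform run decomposition of one period (of length `p`) of `f`:
a list of positive run lengths summing to `p` such that each corresponding
consecutive run is constant. -/
def IsURD (f : ℕ → ℕ) (p : ℕ) (L : List ℕ) : Prop :=
  L.sum = p ∧ (∀ a ∈ L, 0 < a) ∧
  ∀ i : Fin L.length, ∀ j < L.get i, f ((L.take i.1).sum + j) = f ((L.take i.1).sum)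

/-- The maximal number of runs in a BRD of `f` (period `p`). -/
noncomputable def maxBRD (f : ℕ → ℕ) (p : ℕ) : ℕ :=
  sSup {m | ∃ L : List ℕ, IsBRD f p L ∧ L.length = m}

/-- The balance coefficient `b(f)` (with respect to period length `p`). -/
noncomputable def balCoeff (f : ℕ → ℕ) (p : ℕ) : ℚ := (maxBRD f p : ℚ) / (p : ℚ)

/-- The type of a run decomposition, as an infinite periodic sequence of run data. -/
def typeSeq (L : List ℕ) : ℕ → ℕ := fun i => L.getD (i % L.length) 0

/-- A BURD rotor: it has a BRD and a URD of the same type, i.e. the `i`-th balanced run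
has length `2·b_i` where `b_i` is the length of the `i`-th uniform run. -/
noncomputable def IsBURD (f : ℕ → ℕ) (p : ℕ) : Prop :=
  ∃ L M : List ℕ, IsBRD f p L ∧ IsURD f p M ∧ ∀ i, typeSeq L i = 2 * typeSeq M i

/-- The ba-frequency `m(f) = 2k/p` of an ab-ba sequence with period length `p`,
where `k` is the number of `21` blocks per period. -/
noncomputable def baFreq (f : ℕ → ℕ) (p : ℕ) : ℚ :=
  (2 * (((Finset.range (p / 2)).filter (fun j => f (2 * j) = 2)).card : ℚ)) / (p : ℚ)

/-! ### Rotor-router networks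

A rotor-router network on a vertex type `V`: a source, a finite set of targets
(outdegree 0), and at every non-target vertex `v` the rotor pattern, recorded by the
sequence `rotor v : ℕ → V` of heads of its successive out-edges.  The underlying digraph
has an edge `v → w` (for non-target `v`) iff `w` occurs in `v`'s rotor pattern. -/

structure RotorNetwork (V : Type) where
  source : V
  target : Finset V
  rotor : V → ℕ → V

namespace RotorNetwork

variable {V : Type} [DecidableEq V]

/-- One step of the particle dynamics on states `(current position, firing counts)`:
at a target, record it and restart at the source; at a non-target vertex `v`, fire the
next term of `v`'s rotor pattern. -/
noncomputable def step (N : RotorNetwork V) (s : V × (V → ℕ)) : V × (V → ℕ) :=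
  if s.1 ∈ N.target then (N.source, s.2)
  else (N.rotor s.1 (s.2 s.1), Function.update s.2 s.1 (s.2 s.1 + 1))

/-- The full trajectory of the particle, started at the source with all rotors fresh. -/
noncomputable def traj (N : RotorNetwork V) : ℕ → V × (V → ℕ)
  | 0 => (N.source, fun _ => 0)
  | t + 1 => N.step (N.traj t)

/-- The hitting sequence: the subsequence of targets visited, in order. -/
noncomputable def hitSeq (N : RotorNetwork V) : ℕ → V :=
  fun k => (N.traj (Nat.nth (fun t => (N.traj t).1 ∈ N.target) k)).1

/-- Adjacency of the underlying digraph. -/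
def adj (N : RotorNetwork V) (v w : V) : Prop :=
  v ∉ N.target ∧ ∃ k, N.rotor v k = w

/-- A valid rotor-router network: the source is not a target, there is at least one
target, and every non-target vertex can reach some target. -/
def Valid (N : RotorNetwork V) : Prop :=
  N.source ∉ N.target ∧ N.target.Nonempty ∧
  ∀ v : V, v ∉ N.target → ∃ t ∈ N.target, Relation.ReflTransGen N.adj v t

/-- The rotor pattern at `v` has type `r`: it is `e ∘ r` for some assignment `e` of
states to out-neighbours. -/
def HasType (N : RotorNetwork V) (v : V) (r : ℕ → ℕ) : Prop :=
  ∃ e : ℕ → V, ∀ k, N.rotor v k = e (r k)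

end RotorNetwork

/-- The alternating rotor type `1, 2, 1, 2, …` of period `2`. -/
def rot12 : ℕ → ℕ := fun k => if k % 2 = 0 then 1 else 2

/-- `r` is universal: every rotor type `r'` is, up to a bijective relabelling of states,
the hitting sequence of some finite rotor-router network all of whose rotors have type `r`. -/
noncomputable def Universal (r : ℕ → ℕ) : Prop :=
  ∀ (r' : ℕ → ℕ) (n' : ℕ), IsMinimalPeriod r' n' →
    ∃ (m : ℕ) (N : RotorNetwork (Fin m)), N.Valid ∧
      (∀ v, v ∉ N.target → N.HasType v r) ∧ SeqEquiv N.hitSeq r'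

/-- The (1-based) position of the `m`-th occurrence of the state `v` in `f`
(`posOf f 1 = f`, `posOf f 2 = g` in the paper's notation; `countIn f · 1 = F`,
`countIn f · 2 = G`). -/
noncomputable def posOf (f : ℕ → ℕ) (v m : ℕ) : ℕ := Nat.nth (fun k => f k = v) (m - 1) + 1

/-- If the merging reductions `s3 → s1` and `s3 → s2` of `f` are
block-repetitive with block lengths `a` and `b`, and `d ≥ 2` divides both `a` and `b`,
then `f` itself is block-repetitive with block length `d`. -/
theorem statement2 (f : ℕ → ℕ) (n : ℕ) (s1 s2 s3 a b d : ℕ)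
    (hmin : IsMinimalPeriod f n) (hstates : 3 ≤ (states f n).card)
    (hs1 : s1 ∈ states f n) (hs2 : s2 ∈ states f n) (hs3 : s3 ∈ states f n)
    (h12 : s1 ≠ s2) (h13 : s1 ≠ s3) (h23 : s2 ≠ s3)
    (ha : BlockRepetitive (merge f s3 s1) n a)
    (hb : BlockRepetitive (merge f s3 s2) n b)
    (hd2 : 2 ≤ d) (hda : d ∣ a) (hdb : d ∣ b) :
    BlockRepetitive f n d := by
  have key : ∀ (g : ℕ → ℕ), BlockRepetitive g n a ∨ BlockRepetitive g n b →
      ∀ k j, j < d → g (k * d + j) = g (k * d) := by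
    intro g hg k j hj
    obtain ⟨c, ⟨h2c, hcn, hconst⟩, hdc⟩ :
        ∃ c, BlockRepetitive g n c ∧ d ∣ c := by
      rcases hg with h | h
      · exact ⟨a, h, hda⟩
      · exact ⟨b, h, hdb⟩
    obtain ⟨e, rfl⟩ := hdc
    have he : 0 < e := by
      rcases Nat.eq_zero_or_pos e with rfl | h
      · omega
      · exact h
    have hk : k * d = (k / e) * (d * e) + (k % e) * d := by
      have := Nat.div_add_mod k e
      nlinarith [Nat.div_add_mod k e]
    have hmlt : k % e < e := Nat.mod_lt _ he
    have hlt : k % e * d + j < d * e := by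
      have : (k % e + 1) * d ≤ e * d := Nat.mul_le_mul_right _ (by omega)
      nlinarith
    have h1 := hconst (k / e) (k % e * d + j) hlt
    have h2 := hconst (k / e) (k % e * d) (by omega)
    have e1 : k * d + j = (k / e) * (d * e) + (k % e * d + j) := by omega
    have e2 : k * d = (k / e) * (d * e) + (k % e * d) := hk
    rw [e1, e2, ← add_assoc] at *
    rw [h1, h2]
  refine ⟨hd2, hda.trans ha.2.1, ?_⟩
  intro k j hj
  have A := key (merge f s3 s1) (Or.inl ha) k j hj
  have B := key (merge f s3 s2) (Or.inr hb) k j hj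
  simp only [merge] at A B
  by_cases h1 : f (k * d + j) = s3 <;> by_cases h2 : f (k * d) = s3 <;>
    simp [h1, h2] at A B <;> omega
end

section
/- If r is a rotor type with exactly two states (both occurring), then the hitting sequence UD(r) of the UD variation of the compressor on r is balanced: the two targets 4 and 5 occur equally often in each period of UD(r). -/
open scoped Classical

/-!
During `n` periods of the source (`n * n` departures) each of `v2`, `v3` fires whole periods
of `r`: `v2` fires `c₁` periods and `v3` fires `c₂`, where `cₐ` counts the state `a` in a
period of `r`. In variation UD a hit at `t4` is a departure `1` from the source followed by
a `2` at `v2`, and a hit at `t5` is a departure `2` followed by a `1` at `v3`; so these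
`n * n` departures produce `c₁ c₂` hits of each target. The hit pattern repeats after them,
so `UD(r)` is periodic with `2 c₁ c₂` hits per period, balanced on that period and hence on
the minimal period, which divides it.
-/

open Function

lemma countIn_eq_count (f : ℕ → ℕ) (t v : ℕ) :
    countIn f t v = Nat.count (fun k => f k = v) t := by
  simp [countIn, Nat.count_eq_card_filter_range]

namespace Nat

variable {p : ℕ → Prop} [DecidablePred p]

lemma count_add_of_periodic {N : ℕ} (hp : Periodic p N) (t : ℕ) :
    count p (t + N) = count p t + count p N := by
  induction t with
  | zero => simp
  | succ t ih =>
    rw [show t + 1 + N = t + N + 1 by ring, count_succ, ih, count_succ]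
    simp only [hp t]
    ring

lemma count_add_mul_of_periodic {N : ℕ} (hp : Periodic p N) (t m : ℕ) :
    count p (t + m * N) = count p t + m * count p N := by
  induction m with
  | zero => simp
  | succ m ih =>
    rw [show t + (m + 1) * N = t + m * N + N by ring, count_add_of_periodic hp, ih]
    ring

lemma count_pos_of_periodic {N : ℕ} (hp : Periodic p N) (hN : 0 < N) {t : ℕ} (ht : p t) :
    0 < count p N :=
  Nat.pos_of_ne_zero <|
    count_ne_iff_exists.mpr ⟨t % N, Nat.mod_lt t hN, (hp.map_mod_nat t).symm ▸ ht⟩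

lemma count_and_count (q : ℕ → Prop) [DecidablePred q] (N : ℕ) :
    count (fun t => p t ∧ q (count p t)) N = count q (count p N) := by
  induction N with
  | zero => simp
  | succ N ih =>
    by_cases hN : p N <;> simp [count_succ, hN, ih]

end Nat

section Periodic

variable {α : Type*} {f : ℕ → α}

lemma minPeriod_pos_periodic {q : ℕ} (hq : 0 < q) (hf : Periodic f q) :
    0 < minPeriod f ∧ Periodic f (minPeriod f) :=
  Nat.sInf_mem (s := {n | 0 < n ∧ IsPeriodicWith f n}) ⟨q, hq, hf⟩

lemma minPeriod_dvd {q : ℕ} (hq : 0 < q) (hf : Periodic f q) : minPeriod f ∣ q := by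
  obtain ⟨hp, hfp⟩ := minPeriod_pos_periodic hq hf
  have hmod : Periodic f (q % minPeriod f) := fun k => by
    rw [← hfp.nat_mul (q / minPeriod f) (k + q % minPeriod f), Nat.cast_id, add_assoc,
      Nat.mod_add_div', hf]
  by_contra hnd
  have hpos : 0 < q % minPeriod f := Nat.pos_of_ne_zero (mt Nat.dvd_of_mod_eq_zero hnd)
  exact absurd (Nat.sInf_le ⟨hpos, hmod⟩ : minPeriod f ≤ _) (not_le.mpr (Nat.mod_lt q hp))

end Periodic

section Subsequence

variable {α : Type*} {h : ℕ → Option α} {N : ℕ}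

lemma setOf_isSome_infinite (hh : Periodic h N)
    (hpos : 0 < Nat.count (fun t => (h t).isSome) N) : {t | (h t).isSome}.Infinite := by
  obtain ⟨t, -, ht⟩ := Nat.count_ne_iff_exists.mp hpos.ne'
  refine Set.infinite_of_forall_exists_gt fun a => ⟨t + (a + 1) * N, ?_, ?_⟩
  · have hshift : h (t + (a + 1) * N) = h t := by simpa using hh.nat_mul (a + 1) t
    simpa [hshift] using ht
  · have : 0 < N := Nat.pos_of_ne_zero (by rintro rfl; simp at hpos)
    nlinarith

lemma nth_isSome_add_count (hh : Periodic h N)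
    (hpos : 0 < Nat.count (fun t => (h t).isSome) N) (m : ℕ) :
    Nat.nth (fun t => (h t).isSome) (m + Nat.count (fun t => (h t).isSome) N) =
      Nat.nth (fun t => (h t).isSome) m + N := by
  have hP : Periodic (fun t => (h t).isSome = true) N := fun t => by simp only [hh t]
  have hinf := setOf_isSome_infinite hh hpos
  have hmem : (h (Nat.nth (fun t => (h t).isSome) m + N)).isSome := by
    simpa only [hh _] using Nat.nth_mem_of_infinite hinf m
  calc _ = Nat.nth (fun t => (h t).isSome)
        (Nat.count (fun t => (h t).isSome) (Nat.nth (fun t => (h t).isSome) m + N)) := by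
        rw [Nat.count_add_of_periodic hP, Nat.count_nth_of_infinite hinf]
    _ = _ := Nat.nth_count hmem

lemma periodic_getD_nth (hh : Periodic h N)
    (hpos : 0 < Nat.count (fun t => (h t).isSome) N) (d : α) :
    Periodic (fun k => (h (Nat.nth (fun t => (h t).isSome) k)).getD d)
      (Nat.count (fun t => (h t).isSome) N) := fun k => by
  simp only [nth_isSome_add_count hh hpos, hh _]

lemma count_getD_nth [DecidableEq α] (d v : α) (N : ℕ) :
    Nat.count (fun k => (h (Nat.nth (fun t => (h t).isSome) k)).getD d = v)
        (Nat.count (fun t => (h t).isSome) N) =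
      Nat.count (fun t => h t = some v) N := by
  rw [← Nat.count_and_count]
  congr 1
  ext t
  cases ht : h t with
  | none => simp
  | some w =>
    have hP : (h t).isSome = true := by simp [ht]
    simp [Nat.nth_count (p := fun t => (h t).isSome = true) hP, ht]

end Subsequence

lemma countIn_block_eq_of_count_eq {f : ℕ → ℕ} {p H : ℕ} (hf : Periodic f p)
    (hdvd : p ∣ H) (hH : 0 < H) {v w : ℕ}
    (hvw : Nat.count (fun j => f j = v) H = Nat.count (fun j => f j = w) H) (k : ℕ) :
    countIn (fun j => f (k * p + j)) p v = countIn (fun j => f (k * p + j)) p w := by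
  obtain ⟨d, rfl⟩ := hdvd
  have hd : 0 < d := Nat.pos_of_ne_zero (by rintro rfl; simp at hH)
  have hblock : (fun j => f (k * p + j)) = f :=
    funext fun j => by simpa [add_comm] using hf.nat_mul k j
  have hcount (u : ℕ) :
      Nat.count (fun j => f j = u) (p * d) = d * Nat.count (fun j => f j = u) p := by
    simpa [mul_comm p d] using
      Nat.count_add_mul_of_periodic (p := fun j => f j = u) (fun j => by simp only [hf j]) 0 d
  rw [hcount, hcount] at hvw
  rw [hblock, countIn_eq_count, countIn_eq_count]
  exact Nat.eq_of_mul_eq_mul_left hd hvw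

section Compressor

variable {r : ℕ → ℕ} {n : ℕ}

lemma periodic_state (hr : Periodic r n) (a : ℕ) : Periodic (fun k => r k = a) n :=
  fun k => by simp only [hr k]

lemma count_state_mul (hr : Periodic r n) (a m : ℕ) :
    Nat.count (fun k => r k = a) (m * n) = m * Nat.count (fun k => r k = a) n := by
  simpa using Nat.count_add_mul_of_periodic (periodic_state hr a) 0 m

lemma periodic_hitAt (X Y : Bool) (hr : Periodic r n) : Periodic (hitAt X Y r) (n * n) := by
  intro t
  have hvisit (a : ℕ) : r (countIn r (t + n * n) a) = r (countIn r t a) := by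
    rw [countIn_eq_count, countIn_eq_count,
      Nat.count_add_mul_of_periodic (periodic_state hr a), mul_comm n]
    simpa using hr.nat_mul _ _
  have hrt : r (t + n * n) = r t := by simpa using hr.nat_mul n t
  simp only [hitAt, hrt, hvisit]

lemma count_state_pair (hr : Periodic r n) (a b : ℕ) :
    Nat.count (fun t => r t = a ∧ r (countIn r t a) = b) (n * n) =
      Nat.count (fun k => r k = a) n * Nat.count (fun k => r k = b) n := by
  simp only [countIn_eq_count]
  rw [Nat.count_and_count (p := fun k => r k = a) (fun j => r j = b), count_state_mul hr,
    mul_comm n, count_state_mul hr]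

lemma hitAt_UD_eq_some_four (hr12 : ∀ k, r k = 1 ∨ r k = 2) (t : ℕ) :
    hitAt true false r t = some 4 ↔ r t = 1 ∧ r (countIn r t 1) = 2 := by
  rcases hr12 t with h | h <;> rcases hr12 (countIn r t 1) with h1 | h1 <;>
    rcases hr12 (countIn r t 2) with h2 | h2 <;> simp [hitAt, h, h1, h2]

lemma hitAt_UD_eq_some_five (hr12 : ∀ k, r k = 1 ∨ r k = 2) (t : ℕ) :
    hitAt true false r t = some 5 ↔ r t = 2 ∧ r (countIn r t 2) = 1 := by
  rcases hr12 t with h | h <;> rcases hr12 (countIn r t 1) with h1 | h1 <;>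
    rcases hr12 (countIn r t 2) with h2 | h2 <;> simp [hitAt, h, h1, h2]

end Compressor

/-- For every two-state rotor type `r`, the hitting sequence `UD(r)` is
balanced: it is periodic, and in each (aligned) period the targets `4` and `5` occur
equally often. -/
theorem statement3 (r : ℕ → ℕ) (n : ℕ) (h2 : TwoState r) (hmin : IsMinimalPeriod r n) :
    0 < minPeriod (UDseq r) ∧ IsPeriodicWith (UDseq r) (minPeriod (UDseq r)) ∧
    ∀ k : ℕ,
      countIn (fun j => UDseq r (k * minPeriod (UDseq r) + j)) (minPeriod (UDseq r)) 4 =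
      countIn (fun j => UDseq r (k * minPeriod (UDseq r) + j)) (minPeriod (UDseq r)) 5 := by
  obtain ⟨hr12, ⟨k1, hk1⟩, ⟨k2, hk2⟩⟩ := h2
  obtain ⟨hn, hr : Periodic r n, -⟩ := hmin
  have hc1 := Nat.count_pos_of_periodic (periodic_state hr 1) hn hk1
  have hc2 := Nat.count_pos_of_periodic (periodic_state hr 2) hn hk2
  have hfour : Nat.count (fun t => hitAt true false r t = some 4) (n * n) =
      Nat.count (fun k => r k = 1) n * Nat.count (fun k => r k = 2) n := by
    simpa only [hitAt_UD_eq_some_four hr12] using count_state_pair hr 1 2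
  have hfive : Nat.count (fun t => hitAt true false r t = some 5) (n * n) =
      Nat.count (fun k => r k = 2) n * Nat.count (fun k => r k = 1) n := by
    simpa only [hitAt_UD_eq_some_five hr12] using count_state_pair hr 2 1
  have hH : 0 < Nat.count (fun t => (hitAt true false r t).isSome) (n * n) :=
    (hfour ▸ Nat.mul_pos hc1 hc2).trans_le (Nat.count_mono_left fun t _ ht => by simp [ht])
  have hper : Periodic (UDseq r) _ := periodic_getD_nth (periodic_hitAt true false hr) hH 4
  obtain ⟨hp, hpper⟩ := minPeriod_pos_periodic hH hper
  refine ⟨hp, hpper, countIn_block_eq_of_count_eq hpper (minPeriod_dvd hH hper) hH ?_⟩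
  calc _ = Nat.count (fun t => hitAt true false r t = some 4) (n * n) := count_getD_nth 4 4 _
    _ = Nat.count (fun t => hitAt true false r t = some 5) (n * n) := by
      rw [hfour, hfive, mul_comm]
    _ = _ := (count_getD_nth 4 5 _).symm
end

section
/- Let a rotor-router network be imposed on a finite digraph G in which all rotor patterns at non-target vertices have type r for a fixed rotor type r. Suppose every directed cycle of G contains the source, and let d be the largest number of non-target vertices in a simple directed path of G beginning at the source. Then the period of the hitting sequence of the network is at most |r|^d. -/
open scoped Classical

/-!
Record the state of the particle as its position together with the number of times each
vertex has fired. Rotors have period `n = |r|`, so the future of the walk depends only on the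
position and the firing counts modulo `n`.

Every cycle passes through the source, so the particle returns to the source infinitely
often; let `x v k` be the firing count of `v` at the `k`-th return. Conservation of particles
gives `x v = ∑ u, φ u v ∘ x u` for `v ≠ source`, where `φ u v m` is the number of the first
`m` firings of `u` sent to `v`, and `φ u v (m + n) = φ u v m + φ u v n`. Edges into
`v ≠ source` come from vertices of smaller depth, so by induction on the depth
`x v (k + n ^ depth v) - x v k` is `n` times an `n ^ depth v`-periodic function of `k`.
Hence at the `n ^ d`-th return every firing count is divisible by `n`: the trajectory is
periodic from time `0`, and each hit within one period is followed by one of those `n ^ d`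
returns.
-/

open Function Relation

theorem Function.Periodic.add_mul_eq {α : Type*} {f : ℕ → α} {P : ℕ} (h : Periodic f P)
    (m k : ℕ) : f (k + m * P) = f k := by
  simpa using h.nat_mul m k

theorem Nat.count_add_of_periodic_s5 {p : ℕ → Prop} [DecidablePred p] {T : ℕ} (hp : Periodic p T)
    (a : ℕ) : Nat.count p (a + T) = Nat.count p a + Nat.count p T := by
  rw [add_comm, Nat.count_add, add_comm]
  congr 2
  funext k
  rw [add_comm, hp]

theorem Nat.count_le_count_of_imp_succ {p q : ℕ → Prop} [DecidablePred p] [DecidablePred q]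
    (hpq : ∀ t, p t → q (t + 1)) (hq0 : q 0) {T : ℕ} (hqT : q T) :
    Nat.count p T ≤ Nat.count q T := by
  have h := Nat.count_mono_left (n := T) fun t _ => hpq t
  have hshift := Nat.count_succ' (p := q) T
  have hlast := Nat.count_succ (p := q) T
  rw [if_pos hq0] at hshift
  rw [if_pos hqT] at hlast
  omega

theorem Function.Periodic.exists_period_comp_nth {α : Type*} {f : ℕ → α} {T : ℕ}
    (hf : Periodic f T) (hT : 0 < T) (p : α → Prop) [DecidablePred p] :
    ∃ P, 0 < P ∧ P ≤ max 1 (Nat.count (fun t => p (f t)) T) ∧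
      Periodic (fun k => f (Nat.nth (fun t => p (f t)) k)) P := by
  have hpf : Periodic (fun t => p (f t)) T := hf.comp p
  by_cases hnone : ∀ t, ¬ p (f t)
  · refine ⟨1, one_pos, le_max_left _ _, fun k => ?_⟩
    simp only [Nat.nth_of_forall_not fun t _ => hnone t]
  push Not at hnone
  obtain ⟨t₀, ht₀⟩ := hnone
  have hinf : (Set.ofPred fun t => p (f t)).Infinite := by
    refine Set.infinite_of_forall_exists_gt fun a => ⟨t₀ + (a + 1) * T, ?_, by nlinarith⟩
    change p (f _)
    rwa [hf.add_mul_eq (a + 1) t₀]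
  have hpos : 0 < Nat.count (fun t => p (f t)) T := by
    rw [← hpf.map_mod_nat] at ht₀
    exact Nat.pos_of_ne_zero (Nat.count_ne_iff_exists.2 ⟨_, Nat.mod_lt _ hT, ht₀⟩)
  refine ⟨_, hpos, le_max_right _ _, fun k => ?_⟩
  have hshift : Nat.nth (fun t => p (f t)) (k + Nat.count (fun t => p (f t)) T)
      = Nat.nth (fun t => p (f t)) k + T := by
    have hmem : p (f (Nat.nth (fun t => p (f t)) k + T)) := by
      rw [hf]; exact Nat.nth_mem_of_infinite hinf k
    rw [← Nat.nth_count (p := fun t => p (f t)) hmem, Nat.count_add_of_periodic_s5 hpf,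
      Nat.count_nth_of_infinite hinf]
  simp only [hshift, hf _]

def HasPeriodicIncrements (n P : ℕ) (f : ℕ → ℕ) : Prop :=
  ∃ D : ℕ → ℕ, Periodic D P ∧ ∀ k, f (k + P) = f k + n * D k

theorem add_mul_eq_of_periodic_increment {f c : ℕ → ℕ} {P : ℕ} (hc : Periodic c P)
    (hf : ∀ k, f (k + P) = f k + c k) (m k : ℕ) : f (k + m * P) = f k + m * c k := by
  induction m with
  | zero => simp
  | succ m ih => rw [add_mul, one_mul, ← add_assoc, hf, ih, hc.add_mul_eq m k]; ring

theorem hasPeriodicIncrements_id (n : ℕ) : HasPeriodicIncrements n n id :=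
  ⟨fun _ => 1, fun _ => rfl, fun k => by simp⟩

namespace HasPeriodicIncrements

variable {n P : ℕ} {f : ℕ → ℕ}

theorem mul_period (h : HasPeriodicIncrements n P f) (m : ℕ) :
    HasPeriodicIncrements n (m * P) f := by
  obtain ⟨D, hD, hf⟩ := h
  refine ⟨fun k => m * D k, fun k => by simp only [hD.add_mul_eq m k], fun k => ?_⟩
  rw [add_mul_eq_of_periodic_increment (hD.comp (n * ·)) hf]
  simp only [comp_apply]
  ring

theorem pow_period_mono {i j : ℕ} (h : HasPeriodicIncrements n (n ^ i) f) (hij : i ≤ j) :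
    HasPeriodicIncrements n (n ^ j) f := by
  simpa [← pow_add, Nat.sub_add_cancel hij] using h.mul_period (n ^ (j - i))

theorem comp (h : HasPeriodicIncrements n P f) {g : ℕ → ℕ} {c : ℕ}
    (hg : ∀ a, g (a + n) = g a + c) : HasPeriodicIncrements n (n * P) (g ∘ f) := by
  obtain ⟨D, hD, hf⟩ := h
  refine ⟨fun k => D k * c, fun k => by simp only [hD.add_mul_eq n k], fun k => ?_⟩
  have hfn : f (k + n * P) = f k + n * D k * n := by
    rw [add_mul_eq_of_periodic_increment (hD.comp (n * ·)) hf]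
    simp only [comp_apply]
    ring
  simp only [comp_apply, hfn, add_mul_eq_of_periodic_increment (c := fun _ => c)
    (fun _ => rfl) hg]
  ring

theorem sum {ι : Type*} {s : Finset ι} {f : ι → ℕ → ℕ}
    (h : ∀ i ∈ s, HasPeriodicIncrements n P (f i)) :
    HasPeriodicIncrements n P (fun k => ∑ i ∈ s, f i k) := by
  choose! D hD hf using h
  refine ⟨fun k => ∑ i ∈ s, D i k, fun k => Finset.sum_congr rfl fun i hi => hD i hi k,
    fun k => ?_⟩
  simp only [Finset.mul_sum, ← Finset.sum_add_distrib]
  exact Finset.sum_congr rfl fun i hi => hf i hi k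

end HasPeriodicIncrements

theorem hasPeriodicIncrements_of_rankedFlow {ι : Type*} {U : Finset ι} {s : ι}
    {x : ι → ℕ → ℕ} {φ : ι → ι → ℕ → ℕ} {rank : ι → ℕ} {n : ℕ}
    (hφ : ∀ u ∈ U, ∀ v a, φ u v (a + n) = φ u v a + φ u v n)
    (hs : ∀ k, x s k = k) (hrank_s : 1 ≤ rank s)
    (hx : ∀ v ∈ U, v ≠ s → ∀ k, x v k = ∑ u ∈ U, φ u v (x u k))
    (hrank : ∀ v ∈ U, v ≠ s → ∀ u ∈ U, rank u < rank v ∨ ∀ k, φ u v (x u k) = 0) :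
    ∀ v ∈ U, HasPeriodicIncrements n (n ^ rank v) (x v) := by
  intro v
  induction hr : rank v using Nat.strong_induction_on generalizing v with
  | _ r ih =>
    intro hv
    by_cases hvs : v = s
    · subst hvs
      rw [show x v = id from funext hs, ← hr]
      have hid : HasPeriodicIncrements n (n ^ 1) id := by
        rw [pow_one]; exact hasPeriodicIncrements_id n
      exact hid.pow_period_mono hrank_s
    rw [show x v = fun k => ∑ u ∈ U, φ u v (x u k) from funext (hx v hv hvs)]
    refine HasPeriodicIncrements.sum fun u hu => ?_
    rcases hrank v hv hvs u hu with hlt | hzero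
    · obtain ⟨r', rfl⟩ : ∃ r', r = r' + 1 := ⟨r - 1, by omega⟩
      rw [pow_succ']
      exact ((ih _ (hr ▸ hlt) u rfl hu).pow_period_mono (by omega)).comp (hφ u hu v)
    · exact ⟨fun _ => 0, fun _ => rfl, fun k => by simp [hzero]⟩

structure IsSimplePath {α : Type*} (r : α → α → Prop) (a b : α) (l : List α) : Prop where
  head : l.head? = some a
  chain : l.IsChain r
  nodup : l.Nodup
  getLast : l.getLast? = some b

namespace IsSimplePath

variable {α : Type*} {r : α → α → Prop} {a b c : α} {l : List α}

theorem singleton (a : α) : IsSimplePath r a a [a] :=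
  ⟨rfl, .singleton a, List.nodup_singleton a, rfl⟩

theorem ne_nil (hl : IsSimplePath r a b l) : l ≠ [] := by
  rintro rfl
  exact absurd hl.head (by simp)

theorem concat (hl : IsSimplePath r a b l) (hbc : r b c) (hc : c ∉ l) :
    IsSimplePath r a c (l ++ [c]) where
  head := by rw [List.head?_append_of_ne_nil _ hl.ne_nil, hl.head]
  chain := hl.chain.append (.singleton c) (by simp [hl.getLast, hbc])
  nodup := hl.nodup.append (List.nodup_singleton c) (by simpa using hc)
  getLast := List.getLast?_concat

theorem exists_of_reflTransGen (h : ReflTransGen r a b) : ∃ l, IsSimplePath r a b l := by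
  induction h with
  | refl => exact ⟨_, singleton a⟩
  | @tail b c _ hbc ih =>
    obtain ⟨l, hl⟩ := ih
    by_cases hc : c ∈ l
    · obtain ⟨l₁, l₂, rfl⟩ := List.append_of_mem hc
      have hpre : l₁ ++ [c] <+: l₁ ++ c :: l₂ := ⟨l₂, by simp⟩
      refine ⟨l₁ ++ [c], ?_, hl.chain.prefix hpre, hl.nodup.sublist hpre.sublist, by simp⟩
      rw [← hl.head]
      cases l₁ <;> simp
    · exact ⟨_, hl.concat hbc hc⟩

-- A vertex `c` of `l` with `b → c` would close a cycle `c →* b → c` avoiding `s`.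
theorem notMem_of_rel {s : α}
    (hcyc : ∀ x, ¬ TransGen (fun x y => r x y ∧ x ≠ s ∧ y ≠ s) x x)
    (hl : IsSimplePath r s b l) (hbc : r b c) (hcs : c ≠ s) : c ∉ l := by
  intro hc
  obtain ⟨l₁, l₂, rfl⟩ := List.append_of_mem hc
  have hs₁ : s ∈ l₁ := by
    cases l₁ with
    | nil => exact absurd (Option.some.inj hl.head) hcs
    | cons x l₁ => exact Option.some.inj hl.head ▸ List.mem_cons_self
  have hs₂ : s ∉ c :: l₂ := fun hs => List.disjoint_of_nodup_append hl.nodup hs₁ hs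
  have hchain : (c :: l₂).IsChain (fun x y => r x y ∧ x ≠ s ∧ y ≠ s) :=
    (hl.chain.suffix ⟨l₁, rfl⟩).imp_of_mem_imp fun x y hx hy hxy =>
      ⟨hxy, ne_of_mem_of_not_mem hx hs₂, ne_of_mem_of_not_mem hy hs₂⟩
  have hlast : (c :: l₂).getLast (List.cons_ne_nil _ _) = b := by
    simpa [List.getLast?_append, List.getLast?_eq_some_getLast] using hl.getLast
  have hbl : b ∈ c :: l₂ := hlast ▸ List.getLast_mem _
  exact hcyc c <| TransGen.tail'
    (List.relationReflTransGen_of_exists_isChain_cons l₂ hchain hlast)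
    ⟨hbc, ne_of_mem_of_not_mem hbl hs₂, hcs⟩

end IsSimplePath

theorem exists_not_rel_apply_succ_of_irrefl_transGen {α : Type*} [Finite α]
    {r : α → α → Prop} (hr : ∀ a, ¬ TransGen r a a) (f : ℕ → α) :
    ∃ i, ¬ r (f i) (f (i + 1)) := by
  let r' : α → α → Prop := fun a b => TransGen r b a
  have : IsTrans α r' := ⟨fun _ _ _ hab hbc => hbc.trans hab⟩
  have : Std.Irrefl r' := ⟨hr⟩
  have : IsWellFounded α r' := ⟨Finite.wellFounded_of_trans_of_irrefl r'⟩
  obtain ⟨i, hi⟩ := WellFounded.not_rel_apply_succ (r := r') f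
  exact ⟨i, fun h => hi (.single h)⟩

namespace RotorNetwork

variable {V : Type} [DecidableEq V] (N : RotorNetwork V)

@[simp]
theorem traj_zero : N.traj 0 = (N.source, fun _ => 0) := rfl

theorem traj_succ_of_mem {t : ℕ} (h : (N.traj t).1 ∈ N.target) :
    N.traj (t + 1) = (N.source, (N.traj t).2) := by
  simp [traj, step, h]

theorem traj_succ_of_notMem {t : ℕ} (h : (N.traj t).1 ∉ N.target) :
    N.traj (t + 1) = (N.rotor (N.traj t).1 ((N.traj t).2 (N.traj t).1),
      Function.update (N.traj t).2 (N.traj t).1 ((N.traj t).2 (N.traj t).1 + 1)) := by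
  simp [traj, step, h]

theorem reflTransGen_traj (t : ℕ) : ReflTransGen N.adj N.source (N.traj t).1 := by
  induction t with
  | zero => exact .refl
  | succ t ih =>
    by_cases h : (N.traj t).1 ∈ N.target
    · rw [N.traj_succ_of_mem h]
    · rw [N.traj_succ_of_notMem h]; exact ih.tail ⟨h, _, rfl⟩

theorem traj_snd_eq_count (v : V) (t : ℕ) :
    (N.traj t).2 v = Nat.count (fun t' => (N.traj t').1 = v ∧ v ∉ N.target) t := by
  induction t with
  | zero => rfl
  | succ t ih =>
    rw [Nat.count_succ, ← ih]
    by_cases h : (N.traj t).1 ∈ N.target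
    · rw [N.traj_succ_of_mem h, if_neg (by rintro ⟨rfl, hv⟩; exact hv h)]; rfl
    · rw [N.traj_succ_of_notMem h]
      by_cases hv : (N.traj t).1 = v
      · subst hv; simp [h]
      · simp [Ne.symm hv, hv]

theorem traj_snd_eq_zero_of_mem {v : V} (hv : v ∈ N.target) (t : ℕ) : (N.traj t).2 v = 0 := by
  simp [traj_snd_eq_count, hv]

theorem traj_snd_eq_zero_of_not_reachable {v : V} (hv : ¬ ReflTransGen N.adj N.source v)
    (t : ℕ) : (N.traj t).2 v = 0 := by
  rw [traj_snd_eq_count, Nat.count_iff_forall_not]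
  rintro t' - ⟨rfl, -⟩
  exact hv (N.reflTransGen_traj t')

theorem traj_snd_source (hs : N.source ∉ N.target) (t : ℕ) :
    (N.traj t).2 N.source = Nat.count (fun t' => (N.traj t').1 = N.source) t := by
  simp [traj_snd_eq_count, hs]

noncomputable def firings (u v : V) (m : ℕ) : ℕ := Nat.count (fun j => N.rotor u j = v) m

def StateModEq (n : ℕ) (s s' : V × (V → ℕ)) : Prop :=
  s.1 = s'.1 ∧ ∀ v, s.2 v ≡ s'.2 v [MOD n]

theorem step_stateModEq {n : ℕ} (hrot : ∀ v ∉ N.target, Periodic (N.rotor v) n)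
    {s s' : V × (V → ℕ)} (h : StateModEq n s s') : StateModEq n (N.step s) (N.step s') := by
  obtain ⟨w, c⟩ := s
  obtain ⟨w', c'⟩ := s'
  obtain ⟨rfl, hc⟩ := h
  unfold step
  split_ifs with hw
  · exact ⟨rfl, hc⟩
  refine ⟨?_, fun v => ?_⟩
  · dsimp only
    rw [← (hrot w hw).map_mod_nat, hc w, (hrot w hw).map_mod_nat]
  · dsimp only
    rw [Function.update_apply, Function.update_apply]
    split_ifs
    exacts [(hc w).add_right 1, hc v]

theorem periodic_traj_fst {n T : ℕ} (hrot : ∀ v ∉ N.target, Periodic (N.rotor v) n)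
    (hT : StateModEq n (N.traj T) (N.traj 0)) : Periodic (fun t => (N.traj t).1) T := by
  have h : ∀ t, StateModEq n (N.traj (t + T)) (N.traj t) := by
    intro t
    induction t with
    | zero => simpa using hT
    | succ t ih => rw [add_right_comm]; exact N.step_stateModEq hrot ih
  exact fun t => (h t).1

theorem infinite_setOf_traj_eq_source [Finite V]
    (hcyc : ∀ v, ¬ TransGen (fun a b => N.adj a b ∧ a ≠ N.source ∧ b ≠ N.source) v v) :
    (Set.ofPred fun t => (N.traj t).1 = N.source).Infinite := by
  refine Set.infinite_of_forall_exists_gt fun b => ?_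
  by_contra! hb
  have hpos : ∀ t, b < t → (N.traj t).1 ≠ N.source := fun t ht h => (hb t h).not_gt ht
  have hnt : ∀ t, b < t → (N.traj t).1 ∉ N.target := fun t ht h =>
    hpos (t + 1) (by omega) (by rw [N.traj_succ_of_mem h])
  obtain ⟨i, hi⟩ := exists_not_rel_apply_succ_of_irrefl_transGen hcyc
    fun i => (N.traj (b + 1 + i)).1
  refine hi ⟨?_, hpos _ (by omega), hpos _ (by omega)⟩
  rw [← add_assoc, N.traj_succ_of_notMem (hnt _ (by omega))]
  exact ⟨hnt _ (by omega), _, rfl⟩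


def nonTargetCount (l : List V) : ℕ := (l.filter fun x => decide (x ∉ N.target)).length

def depthSet (v : V) : Set ℕ :=
  {m | ∃ l, IsSimplePath N.adj N.source v l ∧ N.nonTargetCount l = m}

-- `0` (as `sSup ∅`) for vertices not reachable from the source.
noncomputable def depth (v : V) : ℕ := sSup (N.depthSet v)

theorem depth_le {d : ℕ}
    (hd : ∀ v l, IsSimplePath N.adj N.source v l → N.nonTargetCount l ≤ d)
    (v : V) : N.depth v ≤ d :=
  csSup_le' <| by rintro _ ⟨l, hl, rfl⟩; exact hd v l hl

section Fintype

variable [Fintype V]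

def nonTargets : Finset V := Finset.univ.filter (· ∉ N.target)

@[simp]
theorem mem_nonTargets {v : V} : v ∈ N.nonTargets ↔ v ∉ N.target := by
  simp [nonTargets]

theorem count_traj_eq_sum_firings {v : V} (hv : v ≠ N.source) (t : ℕ) :
    Nat.count (fun t' => (N.traj t').1 = v) (t + 1) =
      ∑ u ∈ N.nonTargets, N.firings u v ((N.traj t).2 u) := by
  induction t with
  | zero => simp [Nat.count_one, Ne.symm hv, firings]
  | succ t ih =>
    rw [Nat.count_succ, ih]
    by_cases h : (N.traj t).1 ∈ N.target
    · simp [N.traj_succ_of_mem h, Ne.symm hv]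
    rw [N.traj_succ_of_notMem h]
    generalize N.traj t = st at h ⊢
    obtain ⟨w, c⟩ := st
    have hw : w ∈ N.nonTargets := (N.mem_nonTargets).2 h
    have hfire : N.firings w v (c w + 1) =
        N.firings w v (c w) + if N.rotor w (c w) = v then 1 else 0 :=
      Nat.count_succ _ _
    rw [Finset.sum_eq_add_sum_sdiff_singleton_of_mem hw]
    simp only [Function.apply_update (fun u => N.firings u v), Finset.sum_update_of_mem hw,
      hfire]
    ring

theorem bddAbove_depthSet (v : V) : BddAbove (N.depthSet v) :=
  ⟨Fintype.card V, by
    rintro _ ⟨l, hl, rfl⟩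
    exact (List.length_filter_le _ _).trans hl.nodup.length_le_card⟩

theorem le_depth {v : V} {m : ℕ} (hm : m ∈ N.depthSet v) : m ≤ N.depth v :=
  le_csSup (N.bddAbove_depthSet v) hm

theorem depth_mem {v : V} (hv : ReflTransGen N.adj N.source v) : N.depth v ∈ N.depthSet v := by
  obtain ⟨l, hl⟩ := IsSimplePath.exists_of_reflTransGen hv
  exact Nat.sSup_mem ⟨_, l, hl, rfl⟩ (N.bddAbove_depthSet v)

theorem one_le_depth_source (hs : N.source ∉ N.target) : 1 ≤ N.depth N.source :=
  N.le_depth ⟨[N.source], .singleton _, by simp [nonTargetCount, hs]⟩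

theorem depth_lt_depth
    (hcyc : ∀ v, ¬ TransGen (fun a b => N.adj a b ∧ a ≠ N.source ∧ b ≠ N.source) v v)
    {u v : V} (hu : ReflTransGen N.adj N.source u) (huv : N.adj u v) (hvs : v ≠ N.source)
    (hvT : v ∉ N.target) : N.depth u < N.depth v := by
  obtain ⟨l, hl, hlu⟩ := N.depth_mem hu
  have hlv := N.le_depth ⟨_, hl.concat huv (hl.notMem_of_rel hcyc huv hvs), rfl⟩
  have hcount : N.nonTargetCount (l ++ [v]) = N.nonTargetCount l + 1 := by
    simp [nonTargetCount, hvT]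
  omega

theorem traj_snd_nth_pow_mod_eq_zero (hs : N.source ∉ N.target)
    (hcyc : ∀ v, ¬ TransGen (fun a b => N.adj a b ∧ a ≠ N.source ∧ b ≠ N.source) v v)
    {d : ℕ} (hd : ∀ v l, IsSimplePath N.adj N.source v l → N.nonTargetCount l ≤ d)
    {n : ℕ} (hrot : ∀ v ∉ N.target, Periodic (N.rotor v) n) (v : V) :
    (N.traj (Nat.nth (fun t => (N.traj t).1 = N.source) (n ^ d))).2 v % n = 0 := by
  by_cases hvT : v ∈ N.target
  · simp [N.traj_snd_eq_zero_of_mem hvT]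
  have hinf := N.infinite_setOf_traj_eq_source hcyc
  set τ := Nat.nth (fun t => (N.traj t).1 = N.source)
  have hτ : ∀ k, (N.traj (τ k)).1 = N.source := Nat.nth_mem_of_infinite hinf
  have hflow : ∀ w ∈ N.nonTargets,
      HasPeriodicIncrements n (n ^ N.depth w) (fun k => (N.traj (τ k)).2 w) := by
    refine hasPeriodicIncrements_of_rankedFlow (φ := N.firings)
      (fun u hu w => Nat.count_add_of_periodic_s5 ((hrot u ((N.mem_nonTargets).1 hu)).comp (· = w)))
      (fun k => by rw [N.traj_snd_source hs, Nat.count_nth_of_infinite hinf])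
      (N.one_le_depth_source hs) (fun w hw hws k => ?_) (fun w hw hws u hu => ?_)
    · have hwT : w ∉ N.target := (N.mem_nonTargets).1 hw
      rw [← N.count_traj_eq_sum_firings hws, Nat.count_succ,
        if_neg (by rw [hτ]; exact Ne.symm hws),
        traj_snd_eq_count]
      simp [hwT]
    · by_cases hur : ReflTransGen N.adj N.source u
      · by_cases huw : ∃ j, N.rotor u j = w
        · exact .inl (N.depth_lt_depth hcyc hur ⟨(N.mem_nonTargets).1 hu, huw⟩ hws
            ((N.mem_nonTargets).1 hw))
        · push Not at huw
          exact .inr fun k => Nat.count_iff_forall_not.2 fun j _ => huw j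
      · exact .inr fun k => by rw [N.traj_snd_eq_zero_of_not_reachable hur]; rfl
  obtain ⟨D, -, hD⟩ := (hflow v (by simpa using hvT)).pow_period_mono (N.depth_le hd v)
  have hτ0 : τ 0 = 0 := Nat.nth_zero_of_zero (rfl : (N.traj 0).1 = N.source)
  have hv : (N.traj (τ (n ^ d))).2 v = n * D 0 := by simpa [hτ0] using hD 0
  rw [hv, Nat.mul_mod_right]

end Fintype

end RotorNetwork

/-- In a homogeneous rotor-router network of type `r` in which every
directed cycle contains the source, if `d` bounds the number of non-target vertices on
any simple directed path starting at the source, then the hitting sequence has a period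
of length at most `|r|^d`. -/
theorem statement5 {V : Type} [Fintype V] [DecidableEq V] (N : RotorNetwork V)
    (hvalid : N.Valid) (r : ℕ → ℕ) (n : ℕ) (hmin : IsMinimalPeriod r n)
    (htype : ∀ v, v ∉ N.target → N.HasType v r)
    (hcyc : ∀ v : V,
      ¬ Relation.TransGen (fun a b => N.adj a b ∧ a ≠ N.source ∧ b ≠ N.source) v v)
    (d : ℕ)
    (hd : ∀ l : List V, l.head? = some N.source → l.Chain' N.adj → l.Nodup →
      (l.filter (fun v => decide (v ∉ N.target))).length ≤ d) :
    ∃ p : ℕ, 0 < p ∧ p ≤ n ^ d ∧ IsPeriodicWith N.hitSeq p := by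
  obtain ⟨hs, -, -⟩ := hvalid
  obtain ⟨hn, hper, -⟩ := hmin
  have hrot : ∀ v ∉ N.target, Periodic (N.rotor v) n := fun v hv k => by
    obtain ⟨e, he⟩ := htype v hv
    rw [he, he, hper]
  have hinf := N.infinite_setOf_traj_eq_source hcyc
  set T := Nat.nth (fun t => (N.traj t).1 = N.source) (n ^ d)
  have hsT : (N.traj T).1 = N.source := Nat.nth_mem_of_infinite hinf _
  have hT : 0 < T := (Nat.zero_le _).trans_lt ((Nat.nth_lt_nth hinf).2 (pow_pos hn d))
  have hperiod : Periodic (fun t => (N.traj t).1) T :=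
    N.periodic_traj_fst hrot ⟨hsT, fun v => by
      simpa [Nat.ModEq] using N.traj_snd_nth_pow_mod_eq_zero hs hcyc
        (fun _ l hl => hd l hl.head hl.chain hl.nodup) hrot v⟩
  have hhits : Nat.count (fun t => (N.traj t).1 ∈ N.target) T ≤ n ^ d :=
    calc _ ≤ Nat.count (fun t => (N.traj t).1 = N.source) T :=
          Nat.count_le_count_of_imp_succ (q := fun t => (N.traj t).1 = N.source)
            (fun t ht => by rw [N.traj_succ_of_mem ht]) rfl hsT
      _ = n ^ d := Nat.count_nth_of_infinite hinf _
  obtain ⟨p, hp, hple, hperiodic⟩ := hperiod.exists_period_comp_nth hT (· ∈ N.target)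
  exact ⟨p, hp, hple.trans (max_le (Nat.one_le_pow _ _ hn) hhits), hperiodic⟩
end

section
/- If r is a balanced two-state rotor type, then the periods of the hitting sequences UU(r), UD(r), DU(r), and DD(r) each divide |r|; in particular |UU(r)| ≤ |r|, |UD(r)| ≤ |r|, |DU(r)| ≤ |r|, and |DD(r)| ≤ |r|. -/
open scoped Classical

/-! ### Auxiliary lemmas for Statement 6 -/

section Aux

lemma periodic_mul {α : Type*} {f : ℕ → α} {P : ℕ} (h : IsPeriodicWith f P) :
    ∀ q x, f (x + q * P) = f x := by
  intro q
  induction q with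
  | zero => simp
  | succ q ih =>
      intro x
      have : x + (q + 1) * P = (x + q * P) + P := by ring
      rw [this, h, ih]

lemma minPeriod_dvd_s6 {α : Type*} (f : ℕ → α) {n : ℕ} (hn : 0 < n)
    (h : IsPeriodicWith f n) : minPeriod f ∣ n ∧ minPeriod f ≤ n := by
  have hnS : n ∈ {m | 0 < m ∧ IsPeriodicWith f m} := ⟨hn, h⟩
  have hd : minPeriod f ∈ {m | 0 < m ∧ IsPeriodicWith f m} :=
    Nat.sInf_mem ⟨n, hnS⟩
  have hdn : minPeriod f ≤ n := Nat.sInf_le hnS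
  set d := minPeriod f with hdef
  have hdpos : 0 < d := hd.1
  have hmod : IsPeriodicWith f (n % d) := by
    intro k
    calc f (k + n % d) = f (k + n % d + (n / d) * d) := (periodic_mul hd.2 _ _).symm
    _ = f (k + n) := by rw [add_assoc]; rw [Nat.mod_add_div']
    _ = f k := h k
  rcases Nat.eq_zero_or_pos (n % d) with h0 | hpos
  · exact ⟨Nat.dvd_of_mod_eq_zero h0, hdn⟩
  · exfalso
    have : d ≤ n % d := Nat.sInf_le ⟨hpos, hmod⟩
    exact absurd (Nat.mod_lt n hdpos) (not_lt.mpr this)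

/-- An instance-free count of the values of a predicate below `m`. -/
noncomputable def pcount (p : ℕ → Prop) (m : ℕ) : ℕ := ((Finset.range m).filter p).card

lemma pcount_eq (p : ℕ → Prop) [h : DecidablePred p] (m : ℕ) :
    Nat.count p m = pcount p m := by
  rw [Nat.count_eq_card_filter_range, pcount, Subsingleton.elim h (Classical.decPred p)]

lemma pcount_eq_card (p : ℕ → Prop) [h : DecidablePred p] (m : ℕ) :
    pcount p m = ((Finset.range m).filter p).card := by
  rw [← pcount_eq, Nat.count_eq_card_filter_range]

lemma countIn_eq_pcount (f : ℕ → ℕ) (m v : ℕ) :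
    countIn f m v = pcount (fun k => f k = v) m := by
  rw [countIn, pcount,
    Subsingleton.elim (fun k => instDecidableEqNat (f k) v) (Classical.decPred _)]

lemma pcount_succ (p : ℕ → Prop) (m : ℕ) :
    pcount p (m + 1) = pcount p m + if p m then 1 else 0 := by
  classical
  rw [← pcount_eq, ← pcount_eq, Nat.count_succ]

lemma pcount_monotone (p : ℕ → Prop) : Monotone (pcount p) := by
  classical
  intro a b hab
  rw [← pcount_eq, ← pcount_eq]
  exact Nat.count_monotone p hab

lemma pcount_strict_mono {p : ℕ → Prop} {m k : ℕ} (hm : p m) (hmk : m < k) :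
    pcount p m < pcount p k := by
  classical
  rw [← pcount_eq, ← pcount_eq]
  exact Nat.count_strict_mono hm hmk

lemma pcount_injective {p : ℕ → Prop} {m k : ℕ} (hm : p m) (hk : p k)
    (h : pcount p m = pcount p k) : m = k := by
  classical
  rw [← pcount_eq, ← pcount_eq] at h
  exact Nat.count_injective hm hk h

lemma pcount_nth_of_infinite {p : ℕ → Prop} (hp : (setOf p).Infinite) (j : ℕ) :
    pcount p (Nat.nth p j) = j := by
  classical
  rw [← pcount_eq]
  exact Nat.count_nth_of_infinite hp j

lemma nth_pcount {p : ℕ → Prop} {m : ℕ} (hm : p m) : Nat.nth p (pcount p m) = m := by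
  classical
  rw [← pcount_eq]
  exact Nat.nth_count hm

lemma pcount_add_period {p : ℕ → Prop} {P : ℕ}
    (hp : ∀ t, p (t + P) ↔ p t) : ∀ t, pcount p (t + P) = pcount p t + pcount p P := by
  intro t
  induction t with
  | zero => simp [pcount]
  | succ t ih =>
      have h1 : t + 1 + P = (t + P) + 1 := by ring
      rw [h1, pcount_succ, pcount_succ, ih]
      have he : (if p (t + P) then 1 else 0) = (if p t then 1 else 0) := by
        simp only [hp t]
      rw [he]
      omega

lemma twoState_pcount_sum {r : ℕ → ℕ} (h : ∀ k, r k = 1 ∨ r k = 2) (m : ℕ) :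
    pcount (fun k => r k = 1) m + pcount (fun k => r k = 2) m = m := by
  induction m with
  | zero => simp [pcount]
  | succ m ih =>
      rw [pcount_succ, pcount_succ]
      rcases h m with h1 | h1 <;> simp [h1] <;> omega

lemma infinite_of_periodic {p : ℕ → Prop} {P : ℕ} (hP : 0 < P)
    (hper : ∀ t, p (t + P) ↔ p t) {t0 : ℕ} (h0 : p t0) : (setOf p).Infinite := by
  have hmul : ∀ j, p (t0 + j * P) := by
    intro j
    induction j with
    | zero => simpa using h0
    | succ j ih =>
        have : t0 + (j + 1) * P = (t0 + j * P) + P := by ring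
        rw [this]
        exact (hper _).mpr ih
  apply Set.infinite_of_injective_forall_mem (f := fun j : ℕ => t0 + j * P)
  · intro a b hab
    simp only at hab
    exact Nat.eq_of_mul_eq_mul_right hP (by omega)
  · exact fun j => hmul j

end Aux

section MainLemma

variable {r : ℕ → ℕ} {n : ℕ}

lemma compSeq_periodic (X Y : Bool) (h2 : TwoState r) (hmin : IsMinimalPeriod r n)
    (hbal : countIn r n 1 = countIn r n 2) : IsPeriodicWith (compSeq X Y r) n := by
  obtain ⟨hstates, ⟨k1, hk1⟩, ⟨k2, hk2⟩⟩ := h2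
  have hnpos : 0 < n := hmin.1
  have hper : IsPeriodicWith r n := hmin.2.1
  rw [countIn_eq_pcount, countIn_eq_pcount] at hbal
  have hsum0 := twoState_pcount_sum hstates n
  set q1 : ℕ → Prop := fun k => r k = 1 with hq1def
  set q2 : ℕ → Prop := fun k => r k = 2 with hq2def
  set c : ℕ := pcount q1 n with hcdef
  have hbal' : pcount q1 n = pcount q2 n := hbal
  have hsum : c + c = n := by omega
  have hq1per : ∀ t, q1 (t + n) ↔ q1 t := fun t => by simp [hq1def, hper t]
  have hq2per : ∀ t, q2 (t + n) ↔ q2 t := fun t => by simp [hq2def, hper t]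
  have hc1_2n : pcount q1 (2 * n) = n := by
    have := pcount_add_period hq1per n
    rw [two_mul]; omega
  have hc2_2n : pcount q2 (2 * n) = n := by
    have := pcount_add_period hq2per n
    rw [two_mul]; omega
  have hq1inf : (setOf q1).Infinite :=
    infinite_of_periodic hnpos hq1per (show q1 k1 from hk1)
  have hq2inf : (setOf q2).Infinite :=
    infinite_of_periodic hnpos hq2per (show q2 k2 from hk2)
  -- the counting functions in `hitAt`
  have hF : ∀ t, countIn r t 1 = pcount q1 t := fun t => countIn_eq_pcount r t 1
  have hG : ∀ t, countIn r t 2 = pcount q2 t := fun t => countIn_eq_pcount r t 2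
  -- periodicity of `hitAt` with period `2n`
  have hr2n : ∀ t, r (t + 2 * n) = r t := by
    intro t
    have : t + 2 * n = t + n + n := by ring
    rw [this, hper, hper]
  have hcq1 : ∀ t, pcount q1 (t + 2 * n) = pcount q1 t + n := by
    intro t
    have h1 := pcount_add_period hq1per (t + n)
    have h2 := pcount_add_period hq1per t
    have : t + 2 * n = t + n + n := by ring
    rw [this]; omega
  have hcq2 : ∀ t, pcount q2 (t + 2 * n) = pcount q2 t + n := by
    intro t
    have h1 := pcount_add_period hq2per (t + n)
    have h2 := pcount_add_period hq2per t
    have : t + 2 * n = t + n + n := by ring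
    rw [this]; omega
  have hhit : ∀ t, hitAt X Y r (t + 2 * n) = hitAt X Y r t := by
    intro t
    unfold hitAt
    rw [hr2n, hF, hF, hG, hG, hcq1, hcq2, hper, hper]
  set p : ℕ → Prop := fun t => (hitAt X Y r t).isSome = true with hpdef
  have hpper : ∀ t, p (t + 2 * n) ↔ p t := fun t => by simp [hpdef, hhit t]
  -- counting hits in a window of length 2n
  have hcount_half : ∀ (v : ℕ) (B : Bool) (q : ℕ → Prop), q = (fun k => r k = v) →
      (setOf q).Infinite → pcount q (2 * n) = n →
      ((Finset.range (2 * n)).filter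
          (fun t => r t = v ∧ (decide (r (pcount q t) = 1) ≠ B))).card =
        ((Finset.range n).filter (fun k => decide (r k = 1) ≠ B)).card := by
    intro v B q hqeq hqinf hq2n
    subst hqeq
    apply Finset.card_bij (fun t _ => pcount (fun k => r k = v) t)
    · intro t ht
      simp only [Finset.mem_filter, Finset.mem_range] at ht ⊢
      refine ⟨?_, ht.2.2⟩
      have : pcount (fun k => r k = v) t < pcount (fun k => r k = v) (2 * n) :=
        pcount_strict_mono ht.2.1 ht.1
      omega
    · intro a ha b hb hab
      simp only [Finset.mem_filter, Finset.mem_range] at ha hb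
      exact pcount_injective (p := fun k => r k = v) ha.2.1 hb.2.1 hab
    · intro k hk
      simp only [Finset.mem_filter, Finset.mem_range] at hk
      refine ⟨Nat.nth (fun k => r k = v) k, ?_, pcount_nth_of_infinite hqinf k⟩
      have hqk : r (Nat.nth (fun k => r k = v) k) = v := Nat.nth_mem_of_infinite hqinf k
      have hck : pcount (fun k => r k = v) (Nat.nth (fun k => r k = v) k) = k :=
        pcount_nth_of_infinite hqinf k
      simp only [Finset.mem_filter, Finset.mem_range]
      refine ⟨?_, hqk, by rw [hck]; exact hk.2⟩
      by_contra hle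
      push_neg at hle
      have := pcount_monotone (fun k => r k = v) hle
      omega
  -- the hit condition, branchwise
  have hph : ∀ t, r t = 1 → (p t ↔ (decide (r (pcount q1 t) = 1) ≠ X)) := by
    intro t ht
    simp only [hpdef, hitAt, ht, if_pos, hF]
    split <;> simp_all
  have hph2 : ∀ t, r t = 2 → (p t ↔ (decide (r (pcount q2 t) = 1) ≠ Y)) := by
    intro t ht
    have ht' : ¬ (r t = 1) := by omega
    simp only [hpdef, hitAt, ht', if_neg, hG, if_false]
    split <;> simp_all
  have hcardB : ∀ B : Bool,
      ((Finset.range n).filter (fun k => decide (r k = 1) ≠ B)).card = c := by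
    intro B
    cases B
    · rw [Finset.filter_congr (q := q1) (fun k _ => by simp [hq1def])]
      rw [hcdef, pcount_eq_card]
    · rw [Finset.filter_congr (q := q2)
        (fun k _ => by rcases hstates k with h | h <;> simp [hq2def, h])]
      rw [hcdef, hbal', pcount_eq_card]
  have hp2n : pcount p (2 * n) = n := by
    have hsplit := Finset.card_filter_add_card_filter_not
      (s := (Finset.range (2 * n)).filter p) (p := q1)
    have e1 : ((Finset.range (2 * n)).filter p).filter q1
        = (Finset.range (2 * n)).filter
            (fun t => r t = 1 ∧ (decide (r (pcount q1 t) = 1) ≠ X)) := by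
      rw [Finset.filter_filter]
      apply Finset.filter_congr
      intro t _
      constructor
      · rintro ⟨hp', hq⟩; exact ⟨hq, (hph t hq).mp hp'⟩
      · rintro ⟨hq, hc⟩; exact ⟨(hph t hq).mpr hc, hq⟩
    have e2 : ((Finset.range (2 * n)).filter p).filter (fun t => ¬ q1 t)
        = (Finset.range (2 * n)).filter
            (fun t => r t = 2 ∧ (decide (r (pcount q2 t) = 1) ≠ Y)) := by
      rw [Finset.filter_filter]
      apply Finset.filter_congr
      intro t _
      have h12 : ¬ q1 t ↔ r t = 2 := by
        rcases hstates t with h | h <;> simp [hq1def, h]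
      constructor
      · rintro ⟨hp', hq⟩
        exact ⟨h12.mp hq, (hph2 t (h12.mp hq)).mp hp'⟩
      · rintro ⟨hq, hc⟩
        exact ⟨(hph2 t hq).mpr hc, h12.mpr hq⟩
    have c1 := (hcount_half 1 X q1 hq1def hq1inf hc1_2n).trans (hcardB X)
    have c2 := (hcount_half 2 Y q2 hq2def hq2inf hc2_2n).trans (hcardB Y)
    rw [e1, e2, c1, c2] at hsplit
    rw [pcount_eq_card]
    omega
  have hex : ∃ t0, p t0 := by
    by_contra h
    push_neg at h
    have : pcount p (2 * n) = 0 := by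
      rw [pcount_eq_card, Finset.card_eq_zero, Finset.filter_eq_empty_iff]
      intro t _
      exact h t
    omega
  obtain ⟨t0, ht0⟩ := hex
  have hpinf : (setOf p).Infinite :=
    infinite_of_periodic (show 0 < 2 * n by omega) hpper ht0
  have hnth : ∀ k, Nat.nth p (k + n) = Nat.nth p k + 2 * n := by
    intro k
    have h1 : p (Nat.nth p k) := Nat.nth_mem_of_infinite hpinf k
    have hcn : pcount p (Nat.nth p k) = k := pcount_nth_of_infinite hpinf k
    have h3 : p (Nat.nth p k + 2 * n) := (hpper _).mpr h1
    have h4 : pcount p (Nat.nth p k + 2 * n) = k + n := by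
      rw [pcount_add_period hpper, hcn, hp2n]
    calc Nat.nth p (k + n) = Nat.nth p (pcount p (Nat.nth p k + 2 * n)) := by rw [h4]
    _ = Nat.nth p k + 2 * n := nth_pcount h3
  intro k
  show (hitAt X Y r (Nat.nth (fun t => (hitAt X Y r t).isSome = true) (k + n))).getD 4
      = (hitAt X Y r (Nat.nth (fun t => (hitAt X Y r t).isSome = true) k)).getD 4
  rw [← hpdef, hnth k, hhit]

end MainLemma

/-- If `r` is a balanced two-state rotor type of period `n`, then each of
`UU(r), UD(r), DU(r), DD(r)` is periodic with period `n`, and its (minimal) period divides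
`n`; in particular each of the four periods is at most `n`. -/
theorem statement6 (r : ℕ → ℕ) (n : ℕ) (h2 : TwoState r) (hmin : IsMinimalPeriod r n)
    (hbal : countIn r n 1 = countIn r n 2) :
    (IsPeriodicWith (UUseq r) n ∧ minPeriod (UUseq r) ∣ n ∧ minPeriod (UUseq r) ≤ n) ∧
    (IsPeriodicWith (UDseq r) n ∧ minPeriod (UDseq r) ∣ n ∧ minPeriod (UDseq r) ≤ n) ∧
    (IsPeriodicWith (DUseq r) n ∧ minPeriod (DUseq r) ∣ n ∧ minPeriod (DUseq r) ≤ n) ∧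
    (IsPeriodicWith (DDseq r) n ∧ minPeriod (DDseq r) ∣ n ∧ minPeriod (DDseq r) ≤ n) := by
  have hnpos : 0 < n := hmin.1
  have h : ∀ X Y : Bool, IsPeriodicWith (compSeq X Y r) n :=
    fun X Y => compSeq_periodic X Y h2 hmin hbal
  refine ⟨⟨h true true, ?_, ?_⟩, ⟨h true false, ?_, ?_⟩,
    ⟨h false true, ?_, ?_⟩, ⟨h false false, ?_, ?_⟩⟩
  · exact (minPeriod_dvd_s6 _ hnpos (h true true)).1
  · exact (minPeriod_dvd_s6 _ hnpos (h true true)).2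
  · exact (minPeriod_dvd_s6 _ hnpos (h true false)).1
  · exact (minPeriod_dvd_s6 _ hnpos (h true false)).2
  · exact (minPeriod_dvd_s6 _ hnpos (h false true)).1
  · exact (minPeriod_dvd_s6 _ hnpos (h false true)).2
  · exact (minPeriod_dvd_s6 _ hnpos (h false false)).1
  · exact (minPeriod_dvd_s6 _ hnpos (h false false)).2
end

section
/- For every n ≥ 1, the class of 2n-balanced two-state rotor types is closed under the compressor operations: if r is 2n-balanced, then each of UU(r), UD(r), DU(r), DD(r), regarded as a periodic two-state sequence with period length |r|, is 2n-balanced (every aligned block of length 2n contains each of the two targets exactly n times). -/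
open scoped Classical

/-! ### Auxiliary counting machinery for Statement 7 -/

noncomputable def cnt (q : ℕ → Prop) (T : ℕ) : ℕ := ((Finset.range T).filter q).card

lemma cnt_zero (q : ℕ → Prop) : cnt q 0 = 0 := by simp [cnt]

lemma cnt_succ (q : ℕ → Prop) (T : ℕ) :
    cnt q (T + 1) = cnt q T + if q T then 1 else 0 := by
  unfold cnt
  rw [Finset.range_add_one, Finset.filter_insert]
  split
  · rw [Finset.card_insert_of_notMem (by simp)]
  · rw [Nat.add_zero]

lemma countIn_eq_cnt (f : ℕ → ℕ) (T v : ℕ) :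
    countIn f T v = cnt (fun k => f k = v) T := by
  unfold countIn cnt
  congr 1
  ext t
  simp

lemma cnt_mono (q : ℕ → Prop) {A B : ℕ} (h : A ≤ B) : cnt q A ≤ cnt q B :=
  Finset.card_le_card (Finset.filter_subset_filter _ (Finset.range_subset_range.2 h))

lemma cnt_lip (q : ℕ → Prop) (A d : ℕ) : cnt q (A + d) ≤ cnt q A + d := by
  induction d with
  | zero => simp
  | succ d ih =>
    rw [← Nat.add_assoc, cnt_succ]
    split <;> omega

lemma cnt_imp {q q' : ℕ → Prop} (h : ∀ t, q t → q' t) (T : ℕ) : cnt q T ≤ cnt q' T := by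
  apply Finset.card_le_card
  intro t ht
  simp only [Finset.mem_filter] at *
  exact ⟨ht.1, h t ht.2⟩

lemma cnt_congr {q q' : ℕ → Prop} (h : ∀ t, q t ↔ q' t) (T : ℕ) : cnt q T = cnt q' T :=
  Nat.le_antisymm (cnt_imp (fun t => (h t).1) T) (cnt_imp (fun t => (h t).2) T)

lemma cnt_add (q : ℕ → Prop) (A d : ℕ) :
    cnt q (A + d) = cnt q A + cnt (fun j => q (A + j)) d := by
  induction d with
  | zero => simp [cnt_zero]
  | succ d ih =>
    rw [← Nat.add_assoc, cnt_succ, ih, cnt_succ]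
    split <;> omega

lemma cnt_between {q : ℕ → Prop} {A B : ℕ} (hAB : A ≤ B)
    (h : ∀ t, A ≤ t → t < B → ¬ q t) : cnt q B = cnt q A := by
  induction B, hAB using Nat.le_induction with
  | base => rfl
  | succ B hAB ih =>
    rw [cnt_succ, if_neg (h B hAB (Nat.lt_succ_self B)), Nat.add_zero]
    exact ih (fun t h1 h2 => h t h1 (h2.trans (Nat.lt_succ_self B)))

lemma cnt_count (q : ℕ → Prop) (T : ℕ) : cnt q T = Nat.count q T :=
  (Nat.count_eq_card_filter_range q T).symm

section Main

variable {n : ℕ} {r : ℕ → ℕ}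

lemma sum_counts (h2 : ∀ k, r k = 1 ∨ r k = 2) (T : ℕ) :
    cnt (fun k => r k = 1) T + cnt (fun k => r k = 2) T = T := by
  induction T with
  | zero => simp [cnt_zero]
  | succ T ih =>
    rw [cnt_succ, cnt_succ]
    rcases h2 T with h | h <;> simp [h] <;> omega

lemma count_mul (hn : 1 ≤ n) (h2 : ∀ k, r k = 1 ∨ r k = 2)
    (hbal : BalancedBlocks r (2 * n)) :
    ∀ v, (v = 1 ∨ v = 2) → ∀ q, cnt (fun k => r k = v) (2 * n * q) = n * q := by
  have hblock : ∀ q v, (v = 1 ∨ v = 2) →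
      cnt (fun j => r (q * (2 * n) + j) = v) (2 * n) = n := by
    intro q v hv
    have h1 := hbal q
    rw [countIn_eq_cnt, countIn_eq_cnt] at h1
    have h2' := sum_counts (r := fun j => r (q * (2 * n) + j)) (fun k => h2 _) (2 * n)
    rcases hv with rfl | rfl <;> omega
  intro v hv q
  induction q with
  | zero => simp [cnt_zero]
  | succ q ih =>
    have he : 2 * n * (q + 1) = 2 * n * q + 2 * n := by ring
    rw [he, cnt_add, ih]
    have : cnt (fun j => r (2 * n * q + j) = v) (2 * n) = n := by
      rw [cnt_congr (fun j => by rw [Nat.mul_comm (2*n) q])]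
      exact hblock q v hv
    rw [this]; ring

/-- The key balance lemma: if the total number of recorded hits up to time `T`
is `2 n M`, then exactly `n M` of them are of each kind. -/
lemma key_lemma (hn : 1 ≤ n) (h2 : ∀ k, r k = 1 ∨ r k = 2)
    (hcm : ∀ v, (v = 1 ∨ v = 2) → ∀ q, cnt (fun k => r k = v) (2 * n * q) = n * q)
    {c1 c2 : ℕ} (hc1 : c1 = 1 ∨ c1 = 2) (hc2 : c2 = 1 ∨ c2 = 2) (T M : ℕ)
    (hsum : cnt (fun k => r k = c1) (cnt (fun k => r k = 1) T)
          + cnt (fun k => r k = c2) (cnt (fun k => r k = 2) T) = 2 * n * M) :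
    cnt (fun k => r k = c1) (cnt (fun k => r k = 1) T) = n * M ∧
    cnt (fun k => r k = c2) (cnt (fun k => r k = 2) T) = n * M := by
  set a := cnt (fun k => r k = 1) T with ha
  set b := cnt (fun k => r k = 2) T with hb
  set h4 := cnt (fun k => r k = c1) a with hh4
  set h5 := cnt (fun k => r k = c2) b with hh5
  obtain ⟨Q, y, hT, hy⟩ : ∃ Q y, T = 2 * n * Q + y ∧ y < 2 * n :=
    ⟨T / (2 * n), T % (2 * n), (Nat.div_add_mod T (2 * n)).symm,
      Nat.mod_lt T (by omega)⟩
  have hab : a + b = T := sum_counts h2 T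
  -- bounds on a, b
  have haL : n * Q ≤ a := by
    rw [← hcm 1 (Or.inl rfl) Q]
    exact cnt_mono _ (by rw [hT]; exact Nat.le_add_right _ _)
  have hbL : n * Q ≤ b := by
    rw [← hcm 2 (Or.inr rfl) Q]
    exact cnt_mono _ (by rw [hT]; exact Nat.le_add_right _ _)
  have hTQ1 : T ≤ 2 * n * (Q + 1) := by
    have : 2 * n * (Q + 1) = 2 * n * Q + 2 * n := by ring
    rw [hT, this]
    exact Nat.add_le_add_left hy.le _
  have haU : a ≤ n * (Q + 1) := by
    rw [← hcm 1 (Or.inl rfl) (Q + 1)]; exact cnt_mono _ hTQ1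
  have hbU : b ≤ n * (Q + 1) := by
    rw [← hcm 2 (Or.inr rfl) (Q + 1)]; exact cnt_mono _ hTQ1
  rcases Nat.even_or_odd Q with ⟨s, hs⟩ | ⟨s, hs⟩
  · -- even case : Q = s + s
    have hw2 : 2 * n * s = n * s + n * s := by ring
    have hcs1 : cnt (fun k => r k = c1) (n * s + n * s) = n * s := by
      rw [← hw2]; exact hcm c1 hc1 s
    have hcs2 : cnt (fun k => r k = c2) (n * s + n * s) = n * s := by
      rw [← hw2]; exact hcm c2 hc2 s
    have haL' : n * s + n * s ≤ a := by
      have : n * Q = n * s + n * s := by rw [hs]; ring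
      omega
    have hbL' : n * s + n * s ≤ b := by
      have : n * Q = n * s + n * s := by rw [hs]; ring
      omega
    obtain ⟨da, hda⟩ : ∃ da, a = (n * s + n * s) + da := ⟨a - (n*s+n*s), by omega⟩
    obtain ⟨db, hdb⟩ : ∃ db, b = (n * s + n * s) + db := ⟨b - (n*s+n*s), by omega⟩
    have h4U : h4 ≤ n * s + da := by
      have := cnt_lip (fun k => r k = c1) (n * s + n * s) da
      rw [← hda, hcs1] at this
      exact this
    have h5U : h5 ≤ n * s + db := by
      have := cnt_lip (fun k => r k = c2) (n * s + n * s) db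
      rw [← hdb, hcs2] at this
      exact this
    have h4L : n * s ≤ h4 := by
      rw [← hcs1]; exact cnt_mono _ (by omega)
    have h5L : n * s ≤ h5 := by
      rw [← hcs2]; exact cnt_mono _ (by omega)
    have hdy : da + db = y := by
      have hQ2 : 2 * n * Q = (n*s+n*s) + (n*s+n*s) := by rw [hs]; ring
      omega
    -- deduce M = s
    have hMs : M = s := by
      have hub : 2 * n * M < 2 * n * (s + 1) := by
        have : 2 * n * (s + 1) = n * s + n * s + 2 * n := by ring
        omega
      have hlb : 2 * n * s ≤ 2 * n * M := by omega
      have h1 : s ≤ M := Nat.le_of_mul_le_mul_left hlb (by omega)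
      have h2' : M < s + 1 := Nat.lt_of_mul_lt_mul_left hub
      omega
    subst hMs
    have : 2 * n * M = n * M + n * M := by ring
    omega
  · -- odd case : Q = 2 s + 1
    have hu : n * (s + 1) = n * s + n := by ring
    have hE : 2 * n * (s + 1) = (n * s + n) + (n * s + n) := by ring
    have hcs1 : cnt (fun k => r k = c1) ((n * s + n) + (n * s + n)) = n * s + n := by
      rw [← hE, hcm c1 hc1 (s + 1), hu]
    have hcs2 : cnt (fun k => r k = c2) ((n * s + n) + (n * s + n)) = n * s + n := by
      rw [← hE, hcm c2 hc2 (s + 1), hu]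
    have hnQ : n * Q = n * s + n * s + n := by rw [hs]; ring
    have hnQ1 : n * (Q + 1) = (n * s + n) + (n * s + n) := by rw [hs]; ring
    have haU' : a ≤ (n * s + n) + (n * s + n) := by omega
    have hbU' : b ≤ (n * s + n) + (n * s + n) := by omega
    obtain ⟨da, hda⟩ : ∃ da, a + da = (n * s + n) + (n * s + n) :=
      ⟨((n * s + n) + (n * s + n)) - a, by omega⟩
    obtain ⟨db, hdb⟩ : ∃ db, b + db = (n * s + n) + (n * s + n) :=
      ⟨((n * s + n) + (n * s + n)) - b, by omega⟩
    have h4U : h4 ≤ n * s + n := by rw [← hcs1]; exact cnt_mono _ (by omega)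
    have h5U : h5 ≤ n * s + n := by rw [← hcs2]; exact cnt_mono _ (by omega)
    have h4L : n * s + n ≤ h4 + da := by
      have := cnt_lip (fun k => r k = c1) a da
      rw [hda, hcs1] at this
      omega
    have h5L : n * s + n ≤ h5 + db := by
      have := cnt_lip (fun k => r k = c2) b db
      rw [hdb, hcs2] at this
      omega
    have hdy : da + db + y = 2 * n := by
      have hQ2 : 2 * n * Q = (n*s+n*s+n) + (n*s+n*s+n) := by rw [hs]; ring
      omega
    by_cases hy0 : y = 0
    · -- a = b = n Q
      have habn : a = n * s + n * s + n ∧ b = n * s + n * s + n := by omega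
      by_cases hcc : c1 = c2
      · have h45 : h4 = h5 := by rw [hh4, hh5, hcc, habn.1, habn.2]
        have : 2 * n * M = n * M + n * M := by ring
        omega
      · exfalso
        have hab' : a = b := by omega
        have hsum' : h4 + h5 = a := by
          rcases hc1 with rfl | rfl <;> rcases hc2 with rfl | rfl
          · exact absurd rfl hcc
          · rw [hh4, hh5, ← hab']; exact sum_counts h2 a
          · rw [hh4, hh5, ← hab', Nat.add_comm]; exact sum_counts h2 a
          · exact absurd rfl hcc
        have h1 : n * (2 * s + 1) = n * (2 * M) := by
          have e1 : n * (2 * s + 1) = n * s + n * s + n := by ring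
          have e2 : n * (2 * M) = 2 * n * M := by ring
          omega
        have := Nat.eq_of_mul_eq_mul_left (by omega : 0 < n) h1
        omega
    · -- y ≥ 1 : M = s + 1
      have hMs : M = s + 1 := by
        have hlb : 2 * n * s < 2 * n * M := by
          have : 2 * n * s + 2 * n = (n*s+n) + (n*s+n) := by ring
          omega
        have hub : 2 * n * M ≤ 2 * n * (s + 1) := by omega
        have h1 : s < M := Nat.lt_of_mul_lt_mul_left hlb
        have h2' : M ≤ s + 1 := Nat.le_of_mul_le_mul_left hub (by omega)
        omega
      subst hMs
      have : n * (s + 1) = n * s + n := by ring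
      omega

end Main

section Hits

variable {r : ℕ → ℕ} (X Y : Bool)

lemma hitAt_shape (t : ℕ) :
    hitAt X Y r t = none ∨ hitAt X Y r t = some 4 ∨ hitAt X Y r t = some 5 := by
  unfold hitAt
  split <;> split <;> simp

lemma hit4_iff (h2 : ∀ k, r k = 1 ∨ r k = 2) (t : ℕ) :
    hitAt X Y r t = some 4 ↔
      (r t = 1 ∧ r (cnt (fun k => r k = 1) t) = (if X then 2 else 1)) := by
  unfold hitAt
  rw [← countIn_eq_cnt]
  by_cases h : r t = 1
  · simp only [h, if_true]
    rcases h2 (countIn r t 1) with h' | h' <;> cases X <;>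
      simp [h'] <;> omega
  · simp only [h, if_false]
    constructor
    · intro hh
      split at hh <;> simp_all
    · intro hh
      exact hh.1.elim

lemma hit5_iff (h2 : ∀ k, r k = 1 ∨ r k = 2) (t : ℕ) :
    hitAt X Y r t = some 5 ↔
      (r t = 2 ∧ r (cnt (fun k => r k = 2) t) = (if Y then 2 else 1)) := by
  unfold hitAt
  rw [← countIn_eq_cnt]
  by_cases h : r t = 1
  · simp only [h, if_true]
    constructor
    · intro hh
      split at hh <;> simp_all
    · intro hh
      exact absurd hh.1 (by omega)
  · have h' : r t = 2 := (h2 t).resolve_left h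
    simp only [h, if_false]
    rcases h2 (countIn r t 2) with hx | hx <;> cases Y <;>
      simp [hx, h'] <;> omega

lemma cntP_split (h2 : ∀ k, r k = 1 ∨ r k = 2) (T : ℕ) :
    cnt (fun t => (hitAt X Y r t).isSome = true) T
      = cnt (fun t => hitAt X Y r t = some 4) T
      + cnt (fun t => hitAt X Y r t = some 5) T := by
  induction T with
  | zero => simp [cnt_zero]
  | succ T ih =>
    rw [cnt_succ, cnt_succ, cnt_succ, ih]
    rcases hitAt_shape X Y (r := r) T with h | h | h <;> simp [h] <;> omega

lemma N4_eq (h2 : ∀ k, r k = 1 ∨ r k = 2) (T : ℕ) :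
    cnt (fun t => hitAt X Y r t = some 4) T
      = cnt (fun k => r k = (if X then 2 else 1)) (cnt (fun k => r k = 1) T) := by
  induction T with
  | zero => simp [cnt_zero]
  | succ T ih =>
    rw [cnt_succ, ih]
    rcases h2 T with h | h
    · have hC : cnt (fun k => r k = 1) (T + 1) = cnt (fun k => r k = 1) T + 1 := by
        rw [cnt_succ, if_pos h]
      rw [hC, cnt_succ]
      congr 1
      have hiff := hit4_iff X Y h2 T
      by_cases hc : r (cnt (fun k => r k = 1) T) = (if X then 2 else 1)
      · rw [if_pos hc, if_pos (hiff.mpr ⟨h, hc⟩)]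
      · rw [if_neg hc, if_neg (fun hh => hc (hiff.mp hh).2)]
    · have h1 : ¬ (r T = 1) := by omega
      have hC : cnt (fun k => r k = 1) (T + 1) = cnt (fun k => r k = 1) T := by
        rw [cnt_succ, if_neg h1, Nat.add_zero]
      rw [hC, if_neg (fun hh => h1 ((hit4_iff X Y h2 T).mp hh).1), Nat.add_zero]

lemma N5_eq (h2 : ∀ k, r k = 1 ∨ r k = 2) (T : ℕ) :
    cnt (fun t => hitAt X Y r t = some 5) T
      = cnt (fun k => r k = (if Y then 2 else 1)) (cnt (fun k => r k = 2) T) := by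
  induction T with
  | zero => simp [cnt_zero]
  | succ T ih =>
    rw [cnt_succ, ih]
    rcases h2 T with h | h
    · have h1 : ¬ (r T = 2) := by omega
      have hC : cnt (fun k => r k = 2) (T + 1) = cnt (fun k => r k = 2) T := by
        rw [cnt_succ, if_neg h1, Nat.add_zero]
      rw [hC, if_neg (fun hh => h1 ((hit5_iff X Y h2 T).mp hh).1), Nat.add_zero]
    · have hC : cnt (fun k => r k = 2) (T + 1) = cnt (fun k => r k = 2) T + 1 := by
        rw [cnt_succ, if_pos h]
      rw [hC, cnt_succ]
      congr 1
      have hiff := hit5_iff X Y h2 T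
      by_cases hc : r (cnt (fun k => r k = 2) T) = (if Y then 2 else 1)
      · rw [if_pos hc, if_pos (hiff.mpr ⟨h, hc⟩)]
      · rw [if_neg hc, if_neg (fun hh => hc (hiff.mp hh).2)]

end Hits

lemma cnt_le_bdd {q : ℕ → Prop} {B : ℕ} (h : ∀ t, q t → t ≤ B) (T : ℕ) :
    cnt q T ≤ B + 1 := by
  unfold cnt
  calc ((Finset.range T).filter q).card
      ≤ (Finset.range (B + 1)).card := Finset.card_le_card (by
        intro t ht
        simp only [Finset.mem_filter, Finset.mem_range] at *
        exact Nat.lt_succ_of_le (h t ht.2))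
    _ = B + 1 := Finset.card_range _

lemma cnt_nth_self {P : ℕ → Prop} (hinf : {t | P t}.Infinite) (K : ℕ) :
    cnt P (Nat.nth P K) = K := by
  rw [cnt_count]; exact Nat.count_nth_of_infinite hinf K

lemma cnt_nth_sub {P q : ℕ → Prop} (hinf : {t | P t}.Infinite)
    (himp : ∀ t, q t → P t) (K : ℕ) :
    cnt (fun j => q (Nat.nth P j)) K = cnt q (Nat.nth P K) := by
  have hcnt : ∀ K, cnt P (Nat.nth P K) = K := fun K => by
    rw [cnt_count]; exact Nat.count_nth_of_infinite hinf K
  induction K with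
  | zero =>
    rw [cnt_zero]
    have h0 : cnt q (Nat.nth P 0) ≤ cnt P (Nat.nth P 0) := cnt_imp himp _
    rw [hcnt 0] at h0
    omega
  | succ K ih =>
    have hmono : Nat.nth P K < Nat.nth P (K + 1) :=
      (Nat.nth_lt_nth hinf).mpr (Nat.lt_succ_self K)
    have hPK : P (Nat.nth P K) := Nat.nth_mem_of_infinite hinf K
    have hnone : ∀ t, Nat.nth P K + 1 ≤ t → t < Nat.nth P (K + 1) → ¬ q t := by
      intro t h1 h2' hq
      have hP := himp t hq
      have c1 : cnt P (t + 1) = cnt P t + 1 := by rw [cnt_succ, if_pos hP]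
      have c2 : cnt P (Nat.nth P K + 1) ≤ cnt P t := cnt_mono _ h1
      have c2' : cnt P (Nat.nth P K + 1) = K + 1 := by
        rw [cnt_succ, hcnt K, if_pos hPK]
      have c3 : cnt P (t + 1) ≤ cnt P (Nat.nth P (K + 1)) := cnt_mono _ h2'
      rw [hcnt (K + 1)] at c3
      omega
    rw [cnt_succ, ih, cnt_between (Nat.succ_le_of_lt hmono) hnone, cnt_succ]

section Assemble

variable {n : ℕ} {r : ℕ → ℕ}

lemma P_infinite (X Y : Bool) (hn : 1 ≤ n) (h2 : ∀ k, r k = 1 ∨ r k = 2)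
    (hcm : ∀ v, (v = 1 ∨ v = 2) → ∀ q, cnt (fun k => r k = v) (2 * n * q) = n * q) :
    {t | (hitAt X Y r t).isSome = true}.Infinite := by
  have hXv : (if X then 2 else 1) = 1 ∨ (if X then 2 else 1) = 2 := by
    cases X <;> simp
  have hYv : (if Y then 2 else 1) = 1 ∨ (if Y then 2 else 1) = 2 := by
    cases Y <;> simp
  by_contra hfin
  rw [Set.not_infinite] at hfin
  obtain ⟨B, hB⟩ := hfin.bddAbove
  have hbound : ∀ T, cnt (fun t => (hitAt X Y r t).isSome = true) T ≤ B + 1 :=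
    fun T => cnt_le_bdd (fun t ht => hB ht) T
  have hval : ∀ m, cnt (fun t => (hitAt X Y r t).isSome = true) (2 * n * (2 * m))
      = n * m + n * m := by
    intro m
    rw [cntP_split X Y h2, N4_eq X Y h2, N5_eq X Y h2]
    have hC1 : cnt (fun k => r k = 1) (2 * n * (2 * m)) = 2 * n * m := by
      rw [hcm 1 (Or.inl rfl) (2 * m)]; ring
    have hC2 : cnt (fun k => r k = 2) (2 * n * (2 * m)) = 2 * n * m := by
      rw [hcm 2 (Or.inr rfl) (2 * m)]; ring
    rw [hC1, hC2, hcm _ hXv m, hcm _ hYv m]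
  have h1 := hbound (2 * n * (2 * (B + 2)))
  rw [hval (B + 2)] at h1
  have h2' : B + 2 ≤ n * (B + 2) := Nat.le_mul_of_pos_left _ (by omega)
  omega

lemma compOp_mul (X Y : Bool) (hn : 1 ≤ n) (h2 : ∀ k, r k = 1 ∨ r k = 2)
    (hcm : ∀ v, (v = 1 ∨ v = 2) → ∀ q, cnt (fun k => r k = v) (2 * n * q) = n * q)
    (q : ℕ) :
    cnt (fun j => compOp X Y r j = 1) (2 * n * q) = n * q ∧
    cnt (fun j => compOp X Y r j = 2) (2 * n * q) = n * q := by
  have hXv : (if X then 2 else 1) = 1 ∨ (if X then 2 else 1) = 2 := by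
    cases X <;> simp
  have hYv : (if Y then 2 else 1) = 1 ∨ (if Y then 2 else 1) = 2 := by
    cases Y <;> simp
  have hinf := P_infinite X Y hn h2 hcm
  set P : ℕ → Prop := fun t => (hitAt X Y r t).isSome = true with hP
  have ho1 : ∀ j, (compOp X Y r j = 1) ↔ hitAt X Y r (Nat.nth P j) = some 4 := by
    intro j
    have hPj : P (Nat.nth P j) := Nat.nth_mem_of_infinite hinf j
    rcases hitAt_shape X Y (r := r) (Nat.nth P j) with h | h | h
    · rw [hP] at hPj; rw [h] at hPj; simp at hPj
    · simp [compOp, compSeq, ← hP, h]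
    · simp [compOp, compSeq, ← hP, h]
  have ho2 : ∀ j, (compOp X Y r j = 2) ↔ hitAt X Y r (Nat.nth P j) = some 5 := by
    intro j
    have hPj : P (Nat.nth P j) := Nat.nth_mem_of_infinite hinf j
    rcases hitAt_shape X Y (r := r) (Nat.nth P j) with h | h | h
    · rw [hP] at hPj; rw [h] at hPj; simp at hPj
    · simp [compOp, compSeq, ← hP, h]
    · simp [compOp, compSeq, ← hP, h]
  have himp4 : ∀ t, hitAt X Y r t = some 4 → P t := by
    intro t ht; rw [hP]; simp only [ht, Option.isSome_some]
  have himp5 : ∀ t, hitAt X Y r t = some 5 → P t := by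
    intro t ht; rw [hP]; simp only [ht, Option.isSome_some]
  have e1 : cnt (fun j => compOp X Y r j = 1) (2 * n * q)
      = cnt (fun k => r k = (if X then 2 else 1))
          (cnt (fun k => r k = 1) (Nat.nth P (2 * n * q))) := by
    rw [cnt_congr ho1, cnt_nth_sub hinf himp4, N4_eq X Y h2]
  have e2 : cnt (fun j => compOp X Y r j = 2) (2 * n * q)
      = cnt (fun k => r k = (if Y then 2 else 1))
          (cnt (fun k => r k = 2) (Nat.nth P (2 * n * q))) := by
    rw [cnt_congr ho2, cnt_nth_sub hinf himp5, N5_eq X Y h2]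
  have hsum : cnt (fun k => r k = (if X then 2 else 1))
          (cnt (fun k => r k = 1) (Nat.nth P (2 * n * q)))
      + cnt (fun k => r k = (if Y then 2 else 1))
          (cnt (fun k => r k = 2) (Nat.nth P (2 * n * q))) = 2 * n * q := by
    rw [← N4_eq X Y h2, ← N5_eq X Y h2, ← cntP_split X Y h2]
    exact cnt_nth_self hinf _
  obtain ⟨k1, k2⟩ := key_lemma hn h2 hcm hXv hYv (Nat.nth P (2 * n * q)) q hsum
  exact ⟨by rw [e1, k1], by rw [e2, k2]⟩

end Assemble

/-- For every `n ≥ 1`, the class of `2n`-balanced two-state rotor types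
is closed under the four compressor operations (targets `4, 5` identified with `1, 2`). -/
theorem statement7 (n : ℕ) (hn : 1 ≤ n) (r : ℕ → ℕ) (p : ℕ)
    (h2 : TwoState r) (hmin : IsMinimalPeriod r p)
    (hbal : BalancedBlocks r (2 * n)) :
    BalancedBlocks (UUop r) (2 * n) ∧ BalancedBlocks (UDop r) (2 * n) ∧
    BalancedBlocks (DUop r) (2 * n) ∧ BalancedBlocks (DDop r) (2 * n) := by
  obtain ⟨h2a, -, -⟩ := h2
  have hcm := count_mul hn h2a hbal
  have main : ∀ X Y : Bool, BalancedBlocks (compOp X Y r) (2 * n) := by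
    intro X Y k
    have hq := compOp_mul X Y hn h2a hcm
    rw [countIn_eq_cnt, countIn_eq_cnt]
    show cnt (fun j => compOp X Y r (k * (2 * n) + j) = 1) (2 * n)
       = cnt (fun j => compOp X Y r (k * (2 * n) + j) = 2) (2 * n)
    have ha1 : cnt (fun t => compOp X Y r t = 1) (k * (2 * n) + 2 * n)
        = cnt (fun t => compOp X Y r t = 1) (k * (2 * n))
        + cnt (fun j => compOp X Y r (k * (2 * n) + j) = 1) (2 * n) :=
      cnt_add _ _ _
    have ha2 : cnt (fun t => compOp X Y r t = 2) (k * (2 * n) + 2 * n)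
        = cnt (fun t => compOp X Y r t = 2) (k * (2 * n))
        + cnt (fun j => compOp X Y r (k * (2 * n) + j) = 2) (2 * n) :=
      cnt_add _ _ _
    have ek : k * (2 * n) = 2 * n * k := by ring
    have ek1 : k * (2 * n) + 2 * n = 2 * n * (k + 1) := by ring
    simp only [ek1, ek] at ha1 ha2 ⊢
    have e3 : 2 * n * k + 2 * n = 2 * n * (k + 1) := by ring
    rw [e3] at ha1 ha2
    rw [(hq k).1, (hq (k + 1)).1] at ha1
    rw [(hq k).2, (hq (k + 1)).2] at ha2
    have e2 : n * (k + 1) = n * k + n := by ring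
    omega
  exact ⟨main true true, main true false, main false true, main false false⟩
end

section
/- If r is an ab-ba rotor (a 2-balanced two-state rotor type), then UD(r) ≡ r and DU(r) ≡ r: the hitting sequences of the UD and DU compressor variations on r are equivalent to r itself. -/
open scoped Classical

private lemma countIn_succ' (f : ℕ → ℕ) (n v : ℕ) :
    countIn f (n+1) v = countIn f n v + if f n = v then 1 else 0 := by
  unfold countIn
  rw [Finset.range_add_one, Finset.filter_insert]
  split_ifs with h
  · rw [Finset.card_insert_of_notMem (by simp)]
  · simp

private lemma countIn_two (f : ℕ → ℕ) (v : ℕ) :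
    countIn f 2 v = (if f 0 = v then 1 else 0) + (if f 1 = v then 1 else 0) := by
  rw [show (2:ℕ) = 1 + 1 from rfl, countIn_succ', countIn_succ']
  simp [countIn]

private lemma pair_cases (r : ℕ → ℕ) (h2 : ∀ k, r k = 1 ∨ r k = 2)
    (habba : BalancedBlocks r 2) (m : ℕ) :
    (r (2*m) = 1 ∧ r (2*m+1) = 2) ∨ (r (2*m) = 2 ∧ r (2*m+1) = 1) := by
  have hb := habba m
  rw [countIn_two, countIn_two] at hb
  simp only [show m * 2 + 0 = 2 * m by ring, show m * 2 + 1 = 2 * m + 1 by ring] at hb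
  rcases h2 (2*m) with h|h <;> rcases h2 (2*m+1) with h'|h'
  · simp [h, h'] at hb
  · exact Or.inl ⟨h, h'⟩
  · exact Or.inr ⟨h, h'⟩
  · simp [h, h'] at hb

private lemma count_even (r : ℕ → ℕ) (h2 : ∀ k, r k = 1 ∨ r k = 2)
    (habba : BalancedBlocks r 2) :
    ∀ m, countIn r (2*m) 1 = m ∧ countIn r (2*m) 2 = m := by
  intro m
  induction m with
  | zero => simp [countIn]
  | succ n ih =>
    rw [show 2*(n+1) = (2*n+1)+1 by ring, countIn_succ', countIn_succ',
        countIn_succ', countIn_succ']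
    rcases pair_cases r h2 habba n with ⟨ha, hb⟩ | ⟨ha, hb⟩ <;>
      simp [ha, hb, ih.1, ih.2]

private lemma hit_pair (r : ℕ → ℕ) (h2 : ∀ k, r k = 1 ∨ r k = 2)
    (habba : BalancedBlocks r 2) (X : Bool) (m : ℕ) :
    (hitAt X (!X) r (2*m) = some (if decide (r m = 1) = X then 5 else 4)
       ∧ hitAt X (!X) r (2*m+1) = none)
  ∨ (hitAt X (!X) r (2*m) = none
       ∧ hitAt X (!X) r (2*m+1) = some (if decide (r m = 1) = X then 5 else 4)) := by
  have hc := count_even r h2 habba m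
  rcases pair_cases r h2 habba m with ⟨ha, hb⟩ | ⟨ha, hb⟩
  · have hG : countIn r (2*m+1) 2 = m := by rw [countIn_succ', hc.2]; simp [ha]
    by_cases hX : decide (r m = 1) = X
    · exact Or.inr (by simp [hitAt, ha, hb, hc.1, hG, hX] <;> cases X <;> simp_all)
    · exact Or.inl (by simp [hitAt, ha, hb, hc.1, hG, hX] <;> cases X <;> simp_all)
  · have hF : countIn r (2*m+1) 1 = m := by rw [countIn_succ', hc.1]; simp [ha]
    by_cases hX : decide (r m = 1) = X
    · exact Or.inl (by simp [hitAt, ha, hb, hc.2, hF, hX] <;> cases X <;> simp_all)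
    · exact Or.inr (by simp [hitAt, ha, hb, hc.2, hF, hX] <;> cases X <;> simp_all)

private lemma count_P (r : ℕ → ℕ) (h2 : ∀ k, r k = 1 ∨ r k = 2)
    (habba : BalancedBlocks r 2) (X : Bool) :
    ∀ m, Nat.count (fun t => (hitAt X (!X) r t).isSome = true) (2*m) = m := by
  intro m
  induction m with
  | zero => simp
  | succ n ih =>
    rw [show 2*(n+1) = (2*n+1)+1 by ring, Nat.count_succ, Nat.count_succ]
    rcases hit_pair r h2 habba X n with ⟨ha, hb⟩ | ⟨ha, hb⟩ <;> simp [ha, hb, ih]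

private lemma compSeq_eq (r : ℕ → ℕ) (h2 : ∀ k, r k = 1 ∨ r k = 2)
    (habba : BalancedBlocks r 2) (X : Bool) (m : ℕ) :
    compSeq X (!X) r m = if decide (r m = 1) = X then 5 else 4 := by
  classical
  have hcnt := count_P r h2 habba X
  rcases hit_pair r h2 habba X m with ⟨he, ho⟩ | ⟨he, ho⟩
  · have hPt : (fun t => (hitAt X (!X) r t).isSome = true) (2*m) := by simp [he]
    have hn : Nat.nth (fun t => (hitAt X (!X) r t).isSome = true) m = 2*m := by
      conv_lhs => rw [← hcnt m]
      exact Nat.nth_count hPt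
    rw [compSeq, hn, he]
    rfl
  · have hPt : (fun t => (hitAt X (!X) r t).isSome = true) (2*m+1) := by simp [ho]
    have hc1 : Nat.count (fun t => (hitAt X (!X) r t).isSome = true) (2*m+1) = m := by
      rw [Nat.count_succ, hcnt m]
      simp [he]
    have hn : Nat.nth (fun t => (hitAt X (!X) r t).isSome = true) m = 2*m+1 := by
      conv_lhs => rw [← hc1]
      exact Nat.nth_count hPt
    rw [compSeq, hn, ho]
    rfl

private lemma UDseq_eq (r : ℕ → ℕ) (h2 : ∀ k, r k = 1 ∨ r k = 2)
    (habba : BalancedBlocks r 2) (m : ℕ) :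
    UDseq r m = if r m = 1 then 5 else 4 := by
  have := compSeq_eq r h2 habba true m
  rcases h2 m with h|h <;> simp [h, UDseq] at this ⊢ <;> simpa using this

private lemma DUseq_eq (r : ℕ → ℕ) (h2 : ∀ k, r k = 1 ∨ r k = 2)
    (habba : BalancedBlocks r 2) (m : ℕ) :
    DUseq r m = if r m = 1 then 4 else 5 := by
  have := compSeq_eq r h2 habba false m
  rcases h2 m with h|h <;> simp [h, DUseq] at this ⊢ <;> simpa using this

/-- If `r` is an ab-ba (2-balanced) rotor, then the hitting sequences
`UD(r)` and `DU(r)` (on targets `4, 5`) are equivalent to `r` itself. -/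
theorem statement9 (r : ℕ → ℕ) (p : ℕ) (h2 : TwoState r) (hmin : IsMinimalPeriod r p)
    (habba : BalancedBlocks r 2) :
    SeqEquiv (UDseq r) r ∧ SeqEquiv (DUseq r) r := by
  obtain ⟨h2', -, -⟩ := h2
  constructor
  · refine ⟨fun x => if x = 4 then 2 else 1, fun k => ?_, fun k l hkl => ?_⟩
    · rcases h2' k with h|h <;> simp [UDseq_eq r h2' habba, h]
    · rcases h2' k with h|h <;> rcases h2' l with h'|h' <;>
        simp [UDseq_eq r h2' habba, h, h'] at hkl ⊢ <;> omega
  · refine ⟨fun x => x - 3, fun k => ?_, fun k l hkl => ?_⟩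
    · rcases h2' k with h|h <;> simp [DUseq_eq r h2' habba, h]
    · rcases h2' k with h|h <;> rcases h2' l with h'|h' <;>
        simp [DUseq_eq r h2' habba, h, h'] at hkl ⊢ <;> omega
end
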